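/- arXiv:2404.18242 — 4 statements merged into one kernel-verified Lean document; each statement's English description precedes it below -/
import Mathlib

section
/- Let f, κ : ℝ → ℝ and α, β, γ > 0 be such that x·f(x) ≤ −α·x² + β for all x ∈ ℝ and |κ(x)| ≤ γ for all x ∈ ℝ. Let x₀ ∈ ℝ and let x : [0,∞) → ℝ satisfy x(t) = x₀ + ∫₀ᵗ (f(x(s)) + κ(x(s))) ds for all t ≥ 0. Then for every integer p ≥ 1 there exists a constant C > 0, independent of t, such that |x(t)|^p ≤ C for all t ≥ 0. -/
open MeasureTheory intervalIntegral Set Filter Topology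

/-- Auxiliary one-sided bound. -/
lemma stmt2_aux (f κ : ℝ → ℝ) (α β γ : ℝ) (hα : 0 < α) (hβ : 0 < β) (hγ : 0 < γ)
    (hdiss : ∀ y : ℝ, y * f y ≤ -α * y ^ 2 + β)
    (hκbd : ∀ y : ℝ, |κ y| ≤ γ)
    (x₀ : ℝ) (x : ℝ → ℝ)
    (hx : ∀ t : ℝ, 0 ≤ t → x t = x₀ + ∫ s in (0:ℝ)..t, (f (x s) + κ (x s))) :
    ∀ t : ℝ, 0 ≤ t → x t ≤ max |x₀| (max 1 ((γ + β) / α)) := by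
  set R : ℝ := max 1 ((γ + β) / α) with hRdef
  set M : ℝ := max |x₀| R with hMdef
  have hRM : R ≤ M := le_max_right _ _
  have hx0M : x₀ ≤ M := le_trans (le_abs_self _) (le_max_left _ _)
  -- the key sign fact
  have hg : ∀ y : ℝ, R ≤ y → f y + κ y ≤ 0 := by
    intro y hy
    have h1 : (1:ℝ) ≤ y := le_trans (le_max_left _ _) hy
    have h2 : (γ + β) / α ≤ y := le_trans (le_max_right _ _) hy
    have h3 : γ + β ≤ α * y := by
      rw [div_le_iff₀ hα] at h2; linarith [mul_comm y α]
    have h4 : κ y ≤ γ := le_trans (le_abs_self _) (hκbd y)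
    by_contra hpos
    push_neg at hpos
    have hy0 : (0:ℝ) < y := lt_of_lt_of_le one_pos h1
    nlinarith [hdiss y, mul_pos hy0 hpos, mul_le_mul_of_nonneg_left h4 hy0.le,
      mul_le_mul_of_nonneg_right h3 hy0.le]
  intro t ht
  by_cases hint : IntervalIntegrable (fun s => f (x s) + κ (x s)) volume 0 t
  · by_contra hMlt
    push_neg at hMlt
    have hx0 : x 0 = x₀ := by simpa using hx 0 le_rfl
    -- continuity on [0, t]
    have hcont : ContinuousOn x (Icc 0 t) := by
      have hprim : ContinuousOn (fun b => ∫ s in (0:ℝ)..b, (f (x s) + κ (x s))) (Icc 0 t) := by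
        have := continuousOn_primitive_interval' hint Set.left_mem_uIcc
        rwa [uIcc_of_le ht] at this
      have : ContinuousOn (fun b => x₀ + ∫ s in (0:ℝ)..b, (f (x s) + κ (x s))) (Icc 0 t) :=
        continuousOn_const.add hprim
      exact this.congr fun s hs => hx s hs.1
    set A : Set ℝ := {s | s ∈ Icc (0:ℝ) t ∧ x s ≤ M} with hAdef
    have hA0 : (0:ℝ) ∈ A := ⟨⟨le_rfl, ht⟩, by rw [hx0]; exact hx0M⟩
    have hAeq : A = Icc (0:ℝ) t ∩ x ⁻¹' Iic M := rfl
    have hAclosed : IsClosed A := by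
      rw [hAeq]
      exact hcont.preimage_isClosed_of_isClosed isClosed_Icc isClosed_Iic
    have hAcomp : IsCompact A :=
      isCompact_Icc.of_isClosed_subset hAclosed fun s hs => hs.1
    set a : ℝ := sSup A with hadef
    have ha : a ∈ A := hAcomp.sSup_mem ⟨0, hA0⟩
    have haI : a ∈ Icc (0:ℝ) t := ha.1
    have hat : a < t := by
      rcases lt_or_eq_of_le haI.2 with h | h
      · exact h
      · exact absurd (h ▸ ha.2) (not_le.mpr hMlt)
    have hgt : ∀ s ∈ Ioc a t, M < x s := by
      intro s hs
      by_contra hle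
      push_neg at hle
      have hsA : s ∈ A := ⟨⟨le_trans haI.1 hs.1.le, hs.2⟩, hle⟩
      exact absurd (le_csSup hAcomp.bddAbove hsA) (not_le.mpr hs.1)
    have hMa : M ≤ x a := by
      have h1 : Tendsto x (𝓝[Ioc a t] a) (𝓝 (x a)) :=
        (hcont a haI).mono_left
          (nhdsWithin_mono _ fun s hs => ⟨haI.1.trans hs.1.le, hs.2⟩)
      haveI := left_nhdsWithin_Ioc_neBot hat
      exact ge_of_tendsto h1 (eventually_mem_nhdsWithin.mono fun s hs => (hgt s hs).le)
    have hRle : ∀ s ∈ Icc a t, f (x s) + κ (x s) ≤ 0 := by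
      intro s hs
      apply hg
      rcases eq_or_lt_of_le hs.1 with h | h
      · exact h ▸ le_trans hRM hMa
      · exact le_trans hRM (hgt s ⟨h, hs.2⟩).le
    have h1 : IntervalIntegrable (fun s => f (x s) + κ (x s)) volume 0 a :=
      hint.mono_set (by
        rw [uIcc_of_le haI.1, uIcc_of_le ht]
        exact Icc_subset_Icc le_rfl haI.2)
    have h2 : IntervalIntegrable (fun s => f (x s) + κ (x s)) volume a t :=
      hint.mono_set (by
        rw [uIcc_of_le hat.le, uIcc_of_le ht]
        exact Icc_subset_Icc haI.1 le_rfl)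
    have hsplit :
        (∫ s in (0:ℝ)..a, (f (x s) + κ (x s))) + ∫ s in a..t, (f (x s) + κ (x s))
          = ∫ s in (0:ℝ)..t, (f (x s) + κ (x s)) :=
      intervalIntegral.integral_add_adjacent_intervals h1 h2
    have hneg : (∫ s in a..t, (f (x s) + κ (x s))) ≤ 0 := by
      have hnn : (0:ℝ) ≤ ∫ s in a..t, -(f (x s) + κ (x s)) :=
        intervalIntegral.integral_nonneg hat.le fun u hu =>
          neg_nonneg.mpr (hRle u hu)
      rwa [intervalIntegral.integral_neg, le_neg, neg_zero] at hnn
    have hxt := hx t ht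
    have hxa := hx a haI.1
    have hxaM : x a ≤ M := ha.2
    linarith
  · rw [hx t ht, intervalIntegral.integral_undef hint, add_zero]
    exact hx0M

/-- Uniform-in-time moment bound for the solution of the closed-loop ODE
`dx/dt = f(x) + κ(x)`, `x(0) = x₀`, under dissipativity of `f` and boundedness of `κ`. -/
theorem stmt2 (f κ : ℝ → ℝ) (α β γ : ℝ) (hα : 0 < α) (hβ : 0 < β) (hγ : 0 < γ)
    (hdiss : ∀ y : ℝ, y * f y ≤ -α * y ^ 2 + β)
    (hκbd : ∀ y : ℝ, |κ y| ≤ γ)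
    (x₀ : ℝ) (x : ℝ → ℝ)
    (hx : ∀ t : ℝ, 0 ≤ t → x t = x₀ + ∫ s in (0:ℝ)..t, (f (x s) + κ (x s))) :
    ∀ p : ℕ, 1 ≤ p → ∃ C : ℝ, 0 < C ∧ ∀ t : ℝ, 0 ≤ t → |x t| ^ p ≤ C := by
  have hub := stmt2_aux f κ α β γ hα hβ hγ hdiss hκbd x₀ x hx
  -- lower bound via the reflected system
  have hlb := stmt2_aux (fun y => -f (-y)) (fun y => -κ (-y)) α β γ hα hβ hγ
    (by intro y
        have h := hdiss (-y)
        have hy : y * -f (-y) = -y * f (-y) := by ring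
        rw [hy]
        rw [neg_sq] at h
        linarith)
    (by intro y; rw [abs_neg]; exact hκbd (-y))
    (-x₀) (fun t => -x t)
    (by intro t ht
        rw [hx t ht, neg_add, ← intervalIntegral.integral_neg]
        congr 1
        apply intervalIntegral.integral_congr
        intro s _
        simp only [neg_neg]
        ring)
  set M : ℝ := max |x₀| (max 1 ((γ + β) / α)) with hMdef
  have hM1 : (1:ℝ) ≤ M := le_trans (le_max_left _ _) (le_max_right _ _)
  have habs : ∀ t : ℝ, 0 ≤ t → |x t| ≤ M := by
    intro t ht
    rcases abs_cases (x t) with ⟨h, _⟩ | ⟨h, _⟩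
    · rw [h]; exact hub t ht
    · rw [h]
      have h2 := hlb t ht
      simp only [abs_neg] at h2
      exact h2
  intro p hp
  refine ⟨M ^ p, pow_pos (lt_of_lt_of_le one_pos hM1) p, fun t ht => ?_⟩
  exact pow_le_pow_left₀ (abs_nonneg _) (habs t ht) p
end

section
/- Under Assumptions (A1) and (A3), let M₁^{ε,δ}(s) := (1/ε)·κ'(x(s))·f(x(π_δ(s)))·(s − π_δ(s)). Then for every integer p ≥ 1 and every c ≥ 0 there exists a constant C > 0, independent of t, ε and δ, such that for all ε, δ ∈ (0,1) and all t ≥ 0: |∫₀ᵗ E(s,t)·( M₁^{ε,δ}(s) − (c/2)·κ'(x(s))·f(x(s)) ) ds|^p ≤ C·|δ/ε − c|^p + C·δ^{2p}/ε^p. -/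
/-!
The contraction of `f` and the bound on `κ` make the closed-loop vector field point strictly
inwards on a large circle, so the trajectory stays in a compact ball, on which every coefficient
below is bounded. Writing `s - π_δ(s) = δ·fract(s/δ)`, the integrand splits into the sampling
error `f(x(π_δ s)) - f(x s) = O(δ)`, the rate mismatch `(δ/ε - c)·fract(s/δ)`, and
`c·(fract(s/δ) - 1/2)` times the smooth function `E(s,t)·κ'(x s)·f(x s)`. The factor
`fract(s/δ) - 1/2` has mean zero on every sampling period, so integrating by parts against its
sawtooth primitive gains a factor `δ`. Since `∫₀ᵗ E(s,t) ds ≤ C_*`, all bounds are uniform in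
`t`, and `c·δ ≤ |δ/ε - c| + δ²/ε` for `δ ≤ 1`.
-/

/-- The sampling map `π_δ(t) = δ·⌊t/δ⌋`. -/
noncomputable def piD (δ t : ℝ) : ℝ := δ * (⌊t / δ⌋ : ℤ)

open Set MeasureTheory Filter Topology

lemma pow_le_two_pow_mul_add {X C u v : ℝ} (hX : 0 ≤ X) (hC : 0 ≤ C) (hu : 0 ≤ u) (hv : 0 ≤ v)
    (h : X ≤ C * (u + v)) (p : ℕ) : X ^ p ≤ 2 ^ p * C ^ p * u ^ p + 2 ^ p * C ^ p * v ^ p := by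
  calc X ^ p ≤ C ^ p * (u + v) ^ p := mul_pow C (u + v) p ▸ pow_le_pow_left₀ hX h p
    _ ≤ C ^ p * (2 ^ p * (u ^ p + v ^ p)) := by
        gcongr
        exact (add_pow_le hu hv p).trans (by gcongr; exacts [one_le_two, Nat.sub_le p 1])
    _ = _ := by ring

lemma mul_le_abs_div_sub_add_sq_div {c δ ε : ℝ} (hε : 0 < ε) (hδ : 0 ≤ δ) (hδ1 : δ ≤ 1) :
    c * δ ≤ |δ / ε - c| + δ ^ 2 / ε := by
  have h : c * δ = δ ^ 2 / ε - δ * (δ / ε - c) := by field_simp; ring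
  rw [h]
  nlinarith [neg_abs_le (δ / ε - c), abs_nonneg (δ / ε - c)]

lemma sub_piD_eq_mul_fract {δ : ℝ} (hδ : δ ≠ 0) (s : ℝ) :
    s - piD δ s = δ * Int.fract (s / δ) := by
  rw [piD, Int.fract, mul_sub, mul_div_cancel₀ s hδ]

lemma piD_nonneg {δ s : ℝ} (hδ : 0 < δ) (hs : 0 ≤ s) : 0 ≤ piD δ s :=
  mul_nonneg hδ.le (Int.cast_nonneg (Int.floor_nonneg.2 (div_nonneg hs hδ.le)))

lemma piD_le {δ : ℝ} (hδ : 0 < δ) (s : ℝ) : piD δ s ≤ s := by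
  have := sub_piD_eq_mul_fract hδ.ne' s
  nlinarith [Int.fract_nonneg (s / δ)]

lemma sub_piD_le {δ : ℝ} (hδ : 0 < δ) (s : ℝ) : s - piD δ s ≤ δ := by
  rw [sub_piD_eq_mul_fract hδ.ne']
  exact mul_le_of_le_one_right hδ.le (Int.fract_lt_one _).le

lemma hasDerivWithinAt_fract_Ici (y : ℝ) : HasDerivWithinAt Int.fract 1 (Ici y) y := by
  have hfloor : ∀ z ∈ Ico y (⌊y⌋ + 1), Int.fract z = z - ⌊y⌋ := fun z hz => by
    rw [Int.fract, Int.floor_eq_iff.2 ⟨(Int.floor_le y).trans hz.1, hz.2⟩]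
  refine ((hasDerivWithinAt_id y _).sub_const (⌊y⌋ : ℝ)).congr_of_eventuallyEq ?_ rfl
  filter_upwards [Ico_mem_nhdsGE (Int.lt_floor_add_one y)] using hfloor

/-- The primitive of `s ↦ Int.fract (s / δ) - 1/2` vanishing on `δℤ`. -/
noncomputable def sawtooth (δ s : ℝ) : ℝ := δ / 2 * (Int.fract (s / δ) ^ 2 - Int.fract (s / δ))

lemma sawtooth_zero (δ : ℝ) : sawtooth δ 0 = 0 := by simp [sawtooth]

lemma abs_sawtooth_le {δ : ℝ} (hδ : 0 ≤ δ) (s : ℝ) : |sawtooth δ s| ≤ δ / 8 := by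
  have h0 := Int.fract_nonneg (s / δ)
  have h1 := Int.fract_lt_one (s / δ)
  have : |Int.fract (s / δ) ^ 2 - Int.fract (s / δ)| ≤ 1 / 4 :=
    abs_le.2 ⟨by nlinarith [sq_nonneg (Int.fract (s / δ) - 1 / 2)], by nlinarith⟩
  rw [sawtooth, abs_mul, abs_of_nonneg (by positivity)]
  nlinarith

lemma continuous_sawtooth (δ : ℝ) : Continuous (sawtooth δ) := by
  refine ContinuousOn.comp_fract (f := fun _ y => δ / 2 * (y ^ 2 - y)) ?_
    (continuous_id.div_const δ) (by simp)
  exact (continuous_const.mul ((continuous_snd.pow 2).sub continuous_snd)).continuousOn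

lemma hasDerivWithinAt_sawtooth {δ : ℝ} (hδ : 0 < δ) (s : ℝ) :
    HasDerivWithinAt (sawtooth δ) (Int.fract (s / δ) - 1 / 2) (Ici s) s := by
  have hdiv : HasDerivWithinAt (fun r => Int.fract (r / δ)) (1 / δ) (Ici s) s := by
    have := (hasDerivWithinAt_fract_Ici (s / δ)).comp s
      ((hasDerivAt_id s).div_const δ).hasDerivWithinAt
      fun r hr => div_le_div_of_nonneg_right (a := s) hr hδ.le
    exact this.congr_deriv (one_mul _)
  have hP : HasDerivAt (fun y : ℝ => δ / 2 * (y ^ 2 - y))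
      (δ / 2 * (2 * Int.fract (s / δ) - 1)) (Int.fract (s / δ)) := by
    simpa using ((hasDerivAt_pow 2 _).sub (hasDerivAt_id _)).const_mul (δ / 2)
  have hslope : δ / 2 * (2 * Int.fract (s / δ) - 1) * (1 / δ) = Int.fract (s / δ) - 1 / 2 := by
    field_simp
  exact (hP.comp_hasDerivWithinAt s hdiv).congr_deriv hslope

lemma intervalIntegrable_mul_fract_sub_half {ψ : ℝ → ℝ} {a b : ℝ} (δ : ℝ)
    (hψ : ContinuousOn ψ (uIcc a b)) :
    IntervalIntegrable (fun s => ψ s * (Int.fract (s / δ) - 1 / 2)) volume a b := by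
  have hsaw : IntervalIntegrable (fun s => Int.fract (s / δ) - 1 / 2) volume a b := by
    refine (intervalIntegrable_const (c := (1 : ℝ))).mono_fun' ?_ (ae_of_all _ fun s => ?_)
    · exact ((measurable_fract.comp (measurable_id.div_const δ)).sub_const _).aestronglyMeasurable
    · have := Int.fract_nonneg (s / δ)
      have := Int.fract_lt_one (s / δ)
      simp only [Real.norm_eq_abs, abs_le]
      constructor <;> linarith
  exact hsaw.continuousOn_mul hψ

theorem abs_integral_mul_fract_sub_half_le {ψ ψ' : ℝ → ℝ} {δ t : ℝ} (hδ : 0 < δ) (ht : 0 ≤ t)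
    (hψ : ContinuousOn ψ (Icc 0 t)) (hψ' : ∀ s ∈ Ioo 0 t, HasDerivAt ψ (ψ' s) s)
    (hψ'i : IntervalIntegrable ψ' volume 0 t) :
    |∫ s in 0..t, ψ s * (Int.fract (s / δ) - 1 / 2)|
      ≤ δ / 8 * (|ψ t| + ∫ s in 0..t, |ψ' s|) := by
  have hi₁ : IntervalIntegrable (fun s => ψ' s * sawtooth δ s) volume 0 t :=
    hψ'i.mul_continuousOn (continuous_sawtooth δ).continuousOn
  have hi₂ := intervalIntegrable_mul_fract_sub_half δ (uIcc_of_le ht ▸ hψ)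
  have hparts : ∫ s in 0..t, ψ s * (Int.fract (s / δ) - 1 / 2)
      = ψ t * sawtooth δ t - ∫ s in 0..t, ψ' s * sawtooth δ s := by
    have := intervalIntegral.integral_eq_sub_of_hasDeriv_right_of_le ht
      (hψ.mul (continuous_sawtooth δ).continuousOn)
      (fun s hs => ((hψ' s hs).hasDerivWithinAt.mul
        ((hasDerivWithinAt_sawtooth hδ s).mono Ioi_subset_Ici_self))) (hi₁.add hi₂)
    rw [intervalIntegral.integral_add hi₁ hi₂, Pi.mul_apply, Pi.mul_apply, sawtooth_zero,
      mul_zero, sub_zero] at this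
    linarith
  have hrest : |∫ s in 0..t, ψ' s * sawtooth δ s| ≤ δ / 8 * ∫ s in 0..t, |ψ' s| := by
    rw [← intervalIntegral.integral_const_mul, ← Real.norm_eq_abs]
    refine intervalIntegral.norm_integral_le_of_norm_le ht (ae_of_all _ fun s _ => ?_)
      (hψ'i.abs.const_mul _)
    rw [Real.norm_eq_abs, abs_mul, mul_comm]
    exact mul_le_mul_of_nonneg_right (abs_sawtooth_le hδ.le s) (abs_nonneg _)
  rw [hparts]
  calc _ ≤ |ψ t * sawtooth δ t| + |∫ s in 0..t, ψ' s * sawtooth δ s| := abs_sub _ _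
    _ ≤ |ψ t| * (δ / 8) + δ / 8 * ∫ s in 0..t, |ψ' s| := by
        rw [abs_mul]
        gcongr
        exact abs_sawtooth_le hδ.le t
    _ = _ := by ring

theorem abs_integral_le_of_abs_le_mul_weight {φ E : ℝ → ℝ} {t M C : ℝ} (ht : 0 ≤ t)
    (hM : 0 ≤ M) (hE : IntervalIntegrable E volume 0 t) (hEC : ∫ s in 0..t, E s ≤ C)
    (hφ : ∀ s ∈ Ioc 0 t, |φ s| ≤ M * E s) :
    |∫ s in 0..t, φ s| ≤ M * C := by
  calc |∫ s in 0..t, φ s| ≤ ∫ s in 0..t, M * E s := by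
        simpa only [Real.norm_eq_abs] using
          intervalIntegral.norm_integral_le_of_norm_le (f := φ) ht
            (ae_of_all _ (by simpa only [Real.norm_eq_abs] using hφ)) (hE.const_mul M)
    _ ≤ M * C := by
        rw [intervalIntegral.integral_const_mul]
        exact mul_le_mul_of_nonneg_left hEC hM

theorem abs_integral_le_abs_integral_sub_add {F G : ℝ → ℝ} {a b : ℝ}
    (hG : IntervalIntegrable G volume a b) :
    |∫ s in a..b, F s| ≤ |∫ s in a..b, (F s - G s)| + |∫ s in a..b, G s| := by
  by_cases hF : IntervalIntegrable F volume a b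
  · rw [intervalIntegral.integral_sub hF hG]
    linarith [abs_sub_abs_le_abs_sub (∫ s in a..b, F s) (∫ s in a..b, G s)]
  · rw [intervalIntegral.integral_undef hF, abs_zero]
    positivity

lemma exists_abs_le_of_continuous {φ : ℝ → ℝ} (hφ : Continuous φ) (R : ℝ) :
    ∃ M, 0 ≤ M ∧ ∀ y, |y| ≤ R → |φ y| ≤ M := by
  obtain ⟨M, hM⟩ :=
    (isCompact_closedBall (0 : ℝ) R).exists_bound_of_continuousOn hφ.continuousOn
  refine ⟨max M 0, le_max_right _ _, fun y hy => (hM y ?_).trans (le_max_left _ _)⟩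
  rwa [mem_closedBall_zero_iff, Real.norm_eq_abs]

section ClosedLoop

variable {φ x : ℝ → ℝ} {x₀ : ℝ}

lemma continuousOn_of_eq_add_integral (hx : ∀ t, 0 ≤ t → x t = x₀ + ∫ s in 0..t, φ (x s))
    {t : ℝ} (ht : 0 ≤ t) (hI : IntervalIntegrable (fun s => φ (x s)) volume 0 t) :
    ContinuousOn x (Icc 0 t) := by
  have := (intervalIntegral.continuousOn_primitive_interval' hI left_mem_uIcc).const_add x₀
  rw [uIcc_of_le ht] at this
  exact this.congr fun r hr => hx r hr.1

lemma hasDerivWithinAt_of_eq_add_integral (hφ : Continuous φ)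
    (hx : ∀ t, 0 ≤ t → x t = x₀ + ∫ s in 0..t, φ (x s))
    {t : ℝ} (ht : 0 ≤ t) (hI : IntervalIntegrable (fun s => φ (x s)) volume 0 t)
    {s : ℝ} (hs : s ∈ Icc 0 t) : HasDerivWithinAt x (φ (x s)) (Icc 0 t) s := by
  have hc : ContinuousOn (fun r => φ (x r)) (Icc 0 t) :=
    hφ.comp_continuousOn (continuousOn_of_eq_add_integral hx ht hI)
  have : Fact (s ∈ Icc 0 t) := ⟨hs⟩
  have hprim := (intervalIntegral.integral_hasDerivWithinAt_right (s := Icc 0 t) (t := Icc 0 t)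
    ((hc.mono (Icc_subset_Icc le_rfl hs.2)).intervalIntegrable_of_Icc hs.1)
    (hc.stronglyMeasurableAtFilter_nhdsWithin measurableSet_Icc s) (hc s hs)).const_add x₀
  exact hprim.congr (fun r hr => hx r hr.1) (hx s hs.1)

lemma abs_le_of_eq_add_integral_of_intervalIntegrable (hφ : Continuous φ)
    (hx : ∀ t, 0 ≤ t → x t = x₀ + ∫ s in 0..t, φ (x s)) {R : ℝ} (hR : |x₀| < R)
    (hout : ∀ y, |y| = R → y * φ y < 0) {t : ℝ} (ht : 0 ≤ t)
    (hI : IntervalIntegrable (fun s => φ (x s)) volume 0 t) {s : ℝ} (hs : s ∈ Icc 0 t) :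
    |x s| ≤ R := by
  have hR0 : 0 ≤ R := (abs_nonneg x₀).trans hR.le
  refine abs_le_of_sq_le_sq ?_ hR0
  refine image_le_of_deriv_right_lt_deriv_boundary (f := fun r => x r ^ 2)
    (f' := fun r => 2 * x r * φ (x r)) (B' := fun _ => 0)
    ((continuousOn_of_eq_add_integral hx ht hI).pow 2) (fun r hr => ?_) ?_
    (fun _ => hasDerivAt_const _ _) (fun r _ hr => ?_) hs
  · have hd := (hasDerivWithinAt_of_eq_add_integral hφ hx ht hI (Ico_subset_Icc_self hr)).pow 2
    refine (hd.mono_of_mem_nhdsWithin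
      (mem_of_superset (Icc_mem_nhdsGE hr.2) (Icc_subset_Icc_left hr.1))).congr_deriv ?_
    norm_num
  · rw [hx 0 le_rfl, intervalIntegral.integral_same, add_zero, ← sq_abs]
    exact pow_le_pow_left₀ (abs_nonneg _) hR.le 2
  · have : |x r| = R := by rwa [← sq_eq_sq₀ (abs_nonneg _) hR0, sq_abs]
    linarith [hout _ this]

/-- Where `φ ∘ x` is not integrable on `[0, s]` the integral is `0`, so the equation pins `x s`
to `x₀`. -/
lemma abs_le_of_eq_add_integral (hφ : Continuous φ)
    (hx : ∀ t, 0 ≤ t → x t = x₀ + ∫ s in 0..t, φ (x s)) {R : ℝ} (hR : |x₀| < R)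
    (hout : ∀ y, |y| = R → y * φ y < 0) {s : ℝ} (hs : 0 ≤ s) : |x s| ≤ R := by
  by_cases hI : IntervalIntegrable (fun r => φ (x r)) volume 0 s
  · exact abs_le_of_eq_add_integral_of_intervalIntegrable hφ hx hR hout hs hI ⟨hs, le_rfl⟩
  · rw [hx s hs, intervalIntegral.integral_undef hI, add_zero]
    exact hR.le

/-- Let `T₀` be the supremum of the times up to which `φ ∘ x` is integrable. Before `T₀` it is
continuous and bounded, after `T₀` the equation forces `x = x₀`, so integrability extends past
`T₀`. -/
lemma intervalIntegrable_of_eq_add_integral (hφ : Continuous φ)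
    (hx : ∀ t, 0 ≤ t → x t = x₀ + ∫ s in 0..t, φ (x s)) {R : ℝ} (hR : |x₀| < R)
    (hout : ∀ y, |y| = R → y * φ y < 0) {T : ℝ} (hT : 0 ≤ T) :
    IntervalIntegrable (fun s => φ (x s)) volume 0 T := by
  set S := {t | 0 ≤ t ∧ IntervalIntegrable (fun s => φ (x s)) volume 0 t}
  have hdown : ∀ t ∈ S, ∀ r ∈ Icc 0 t, r ∈ S := fun t ht r hr =>
    ⟨hr.1, ht.2.mono_set (uIcc_subset_uIcc left_mem_uIcc (by rwa [uIcc_of_le ht.1]))⟩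
  by_contra hTS
  have hbdd : BddAbove S :=
    ⟨T, fun t ht => le_of_not_gt fun hlt => hTS (hdown t ht T ⟨hT, hlt.le⟩).2⟩
  have h0S : (0 : ℝ) ∈ S := ⟨le_rfl, .refl⟩
  set T₀ := sSup S
  have hT₀ : 0 ≤ T₀ := le_csSup hbdd h0S
  obtain ⟨M, -, hM⟩ := exists_abs_le_of_continuous hφ R
  have hcont : ContinuousOn x (Ico 0 T₀) := fun s hs => by
    obtain ⟨t, htS, hst⟩ := exists_lt_of_lt_csSup ⟨0, h0S⟩ hs.2
    refine ((continuousOn_of_eq_add_integral hx htS.1 htS.2) s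
      ⟨hs.1, hst.le⟩).mono_of_mem_nhdsWithin ?_
    filter_upwards [self_mem_nhdsWithin, nhdsWithin_le_nhds (Iio_mem_nhds hst)] with r hr hrt
    exact ⟨hr.1, le_of_lt hrt⟩
  have hT₀S : IntervalIntegrable (fun s => φ (x s)) volume 0 T₀ := by
    rw [intervalIntegrable_iff_integrableOn_Ioo_of_le hT₀]
    refine (integrableOn_const (C := M) (by simp)).mono'
      ((hφ.comp_continuousOn (hcont.mono Ioo_subset_Ico_self)).aestronglyMeasurable
        measurableSet_Ioo) ?_
    filter_upwards [ae_restrict_mem measurableSet_Ioo] with s hs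
    exact hM _ (abs_le_of_eq_add_integral hφ hx hR hout hs.1.le)
  have hconst : EqOn (fun s => φ (x s)) (fun _ => φ x₀) (Ioc T₀ (T₀ + 1)) := fun r hr => by
    have hr0 : 0 ≤ r := hT₀.trans hr.1.le
    have hrS : r ∉ S := fun h => (le_csSup hbdd h).not_gt hr.1
    have hI : ¬ IntervalIntegrable (fun s => φ (x s)) volume 0 r := fun h => hrS ⟨hr0, h⟩
    simp only [hx r hr0, intervalIntegral.integral_undef hI, add_zero]
  have hnext : T₀ + 1 ∈ S := by
    refine ⟨by linarith, hT₀S.trans ?_⟩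
    rw [intervalIntegrable_iff_integrableOn_Ioc_of_le (by linarith),
      integrableOn_congr_fun hconst measurableSet_Ioc]
    exact integrableOn_const (by simp)
  linarith [le_csSup hbdd hnext]

end ClosedLoop

lemma mul_add_lt_zero_of_lt_abs {f κ : ℝ → ℝ} {lam γ y : ℝ} (hlam : 0 < lam)
    (hcontr : ∀ a b : ℝ, (a - b) * (f a - f b) ≤ -lam * (a - b) ^ 2)
    (hκbd : ∀ a : ℝ, |κ a| ≤ γ) (hy : (|f 0| + γ) / lam < |y|) : y * (f y + κ y) < 0 := by
  have h₁ : y * (f y - f 0) ≤ -lam * y ^ 2 := by simpa using hcontr y 0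
  have h₂ : y * f 0 ≤ |y| * |f 0| := (le_abs_self _).trans (abs_mul _ _).le
  have h₃ : y * κ y ≤ |y| * γ :=
    (le_abs_self _).trans ((abs_mul _ _).trans_le (by gcongr; exact hκbd y))
  have h₄ : |f 0| + γ < lam * |y| := by rwa [div_lt_iff₀' hlam] at hy
  have h₅ : 0 < |y| :=
    (div_nonneg (by linarith [abs_nonneg (f 0), abs_nonneg (κ 0), hκbd 0]) hlam.le).trans_lt hy
  nlinarith [sq_abs y, mul_lt_mul_of_pos_left h₄ h₅]

lemma continuousOn_exp_integral_left {w : ℝ → ℝ} {a b : ℝ} (hab : a ≤ b)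
    (hw : ContinuousOn w (Icc a b)) :
    ContinuousOn (fun r => Real.exp (∫ u in r..b, w u)) (Icc a b) := by
  have := intervalIntegral.continuousOn_primitive_interval_left
    (uIcc_of_le hab ▸ hw.integrableOn_Icc (μ := volume))
  rw [uIcc_of_le hab] at this
  exact Real.continuous_exp.comp_continuousOn this

lemma hasDerivAt_exp_integral_left {w : ℝ → ℝ} {a b s : ℝ} (hw : ContinuousOn w (Icc a b))
    (hs : s ∈ Ioo a b) :
    HasDerivAt (fun r => Real.exp (∫ u in r..b, w u)) (-w s * Real.exp (∫ u in s..b, w u)) s := by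
  have hwc : ContinuousAt w s := hw.continuousAt (Icc_mem_nhds hs.1 hs.2)
  have hmeas : StronglyMeasurableAtFilter w (𝓝 s) :=
    (hw.mono Ioo_subset_Icc_self).stronglyMeasurableAtFilter isOpen_Ioo s hs
  have := (intervalIntegral.integral_hasDerivAt_left
    ((hw.mono (Icc_subset_Icc_left hs.1.le)).intervalIntegrable_of_Icc hs.2.le) hmeas hwc).exp
  rwa [mul_comm] at this

lemma abs_sampled_sub_averaged_le {ε δ c s a b F Ma Mb L : ℝ} (hε : 0 < ε) (hδ : 0 < δ)
    (ha : |a| ≤ Ma) (hb : |b| ≤ Mb) (hF : |F - b| ≤ L * δ) :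
    |(1 / ε) * a * F * (s - piD δ s) - (c / 2) * a * b - c * (a * b) * (Int.fract (s / δ) - 1 / 2)|
      ≤ Ma * L * (δ ^ 2 / ε) + Ma * Mb * |δ / ε - c| := by
  have hMa : 0 ≤ Ma := (abs_nonneg a).trans ha
  set θ := Int.fract (s / δ)
  have hθ0 : 0 ≤ θ := Int.fract_nonneg _
  have hθ1 : θ ≤ 1 := (Int.fract_lt_one _).le
  have hsplit : (1 / ε) * a * F * (s - piD δ s) - (c / 2) * a * b - c * (a * b) * (θ - 1 / 2)
      = δ / ε * θ * (a * (F - b)) + (δ / ε - c) * θ * (a * b) := by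
    rw [sub_piD_eq_mul_fract hδ.ne']
    ring
  have h₁ : |δ / ε * θ * (a * (F - b))| ≤ δ / ε * 1 * (Ma * (L * δ)) := by
    rw [abs_mul, abs_mul, abs_mul, abs_of_nonneg (by positivity : 0 ≤ δ / ε), abs_of_nonneg hθ0]
    gcongr
  have h₂ : |(δ / ε - c) * θ * (a * b)| ≤ |δ / ε - c| * 1 * (Ma * Mb) := by
    rw [abs_mul, abs_mul, abs_mul, abs_of_nonneg hθ0]
    gcongr
  calc _ ≤ δ / ε * 1 * (Ma * (L * δ)) + |δ / ε - c| * 1 * (Ma * Mb) :=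
        hsplit ▸ (abs_add_le _ _).trans (add_le_add h₁ h₂)
    _ = _ := by ring

theorem abs_integral_weight_mul_sampled_sub_le {E a b F ψ' : ℝ → ℝ}
    {ε δ c t Ma Mb L K Cw : ℝ} (hε : 0 < ε) (hδ : 0 < δ) (hc : 0 ≤ c) (ht : 0 ≤ t)
    (hL : 0 ≤ L) (hK : 0 ≤ K)
    (hE0 : ∀ s, 0 ≤ E s) (hEc : ContinuousOn E (Icc 0 t)) (hEt : E t = 1)
    (hEint : ∫ s in 0..t, E s ≤ Cw)
    (ha : ∀ s ∈ Icc 0 t, |a s| ≤ Ma) (hb : ∀ s ∈ Icc 0 t, |b s| ≤ Mb)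
    (hF : ∀ s ∈ Ioc 0 t, |F s - b s| ≤ L * δ)
    (hψ : ContinuousOn (fun s => E s * (a s * b s)) (Icc 0 t))
    (hψ' : ∀ s ∈ Ioo 0 t, HasDerivAt (fun s => E s * (a s * b s)) (ψ' s) s)
    (hψ'i : IntervalIntegrable ψ' volume 0 t) (hψ'E : ∀ s ∈ Ioc 0 t, |ψ' s| ≤ K * E s) :
    |∫ s in 0..t, E s * ((1 / ε) * a s * F s * (s - piD δ s) - (c / 2) * a s * b s)|
      ≤ (Ma * L * (δ ^ 2 / ε) + Ma * Mb * |δ / ε - c|) * Cw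
        + c * (δ / 8 * (Ma * Mb + K * Cw)) := by
  have hMa : 0 ≤ Ma := (abs_nonneg _).trans (ha 0 ⟨le_rfl, ht⟩)
  have hMb : 0 ≤ Mb := (abs_nonneg _).trans (hb 0 ⟨le_rfl, ht⟩)
  set ψ := fun s => E s * (a s * b s)
  have hG := (intervalIntegrable_mul_fract_sub_half δ (uIcc_of_le ht ▸ hψ)).const_mul c
  refine (abs_integral_le_abs_integral_sub_add hG).trans (add_le_add ?_ ?_)
  · refine abs_integral_le_of_abs_le_mul_weight ht (by positivity)
      (hEc.intervalIntegrable_of_Icc ht) hEint fun s hs => ?_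
    have hs' : s ∈ Icc 0 t := Ioc_subset_Icc_self hs
    have h := abs_sampled_sub_averaged_le (s := s) (c := c) hε hδ (ha s hs') (hb s hs') (hF s hs)
    calc _ = |E s * ((1 / ε) * a s * F s * (s - piD δ s) - (c / 2) * a s * b s
          - c * (a s * b s) * (Int.fract (s / δ) - 1 / 2))| := by
          simp only [ψ]
          ring_nf
      _ ≤ E s * (Ma * L * (δ ^ 2 / ε) + Ma * Mb * |δ / ε - c|) := by
          rw [abs_mul, abs_of_nonneg (hE0 s)]
          exact mul_le_mul_of_nonneg_left h (hE0 s)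
      _ = _ := mul_comm _ _
  · have hψt : |ψ t| ≤ Ma * Mb := by
      simp only [ψ, hEt, one_mul, abs_mul]
      exact mul_le_mul (ha t ⟨ht, le_rfl⟩) (hb t ⟨ht, le_rfl⟩) (abs_nonneg _) hMa
    have hψ'int : ∫ s in 0..t, |ψ' s| ≤ K * Cw := by
      calc ∫ s in 0..t, |ψ' s| ≤ ∫ s in 0..t, K * E s :=
            intervalIntegral.integral_mono_on_of_le_Ioo ht hψ'i.abs
              ((hEc.intervalIntegrable_of_Icc ht).const_mul K)
              fun s hs => hψ'E s (Ioo_subset_Ioc_self hs)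
        _ ≤ K * Cw := by
            rw [intervalIntegral.integral_const_mul]
            exact mul_le_mul_of_nonneg_left hEint hK
    rw [intervalIntegral.integral_const_mul, abs_mul, abs_of_nonneg hc]
    gcongr
    exact (abs_integral_mul_fract_sub_half_le hδ ht hψ hψ' hψ'i).trans (by gcongr)

lemma abs_sub_comp_piD_le {x x' : ℝ → ℝ} {M δ s : ℝ} (hδ : 0 < δ) (hs : 0 ≤ s)
    (hx : ∀ r ∈ Icc 0 s, HasDerivWithinAt x (x' r) (Icc 0 s) r)
    (hM : ∀ r ∈ Icc 0 s, |x' r| ≤ M) : |x s - x (piD δ s)| ≤ M * δ := by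
  have hM0 : 0 ≤ M := (abs_nonneg _).trans (hM 0 ⟨le_rfl, hs⟩)
  have := (convex_Icc 0 s).norm_image_sub_le_of_norm_hasDerivWithin_le hx hM
    ⟨piD_nonneg hδ hs, piD_le hδ s⟩ ⟨hs, le_rfl⟩
  rw [Real.norm_eq_abs, Real.norm_eq_abs, abs_of_nonneg (sub_nonneg.2 (piD_le hδ s))] at this
  exact this.trans (mul_le_mul_of_nonneg_left (sub_piD_le hδ s) hM0)

lemma abs_neg_mul_mul_add_mul_le {w E a b a' b' Mw Ma Mb Ma' Mb' : ℝ} (hE : 0 ≤ E)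
    (hw : |w| ≤ Mw) (ha : |a| ≤ Ma) (hb : |b| ≤ Mb) (ha' : |a'| ≤ Ma') (hb' : |b'| ≤ Mb') :
    |-w * E * (a * b) + E * (a' * b + a * b')| ≤ (Mw * (Ma * Mb) + (Ma' * Mb + Ma * Mb')) * E := by
  have hMa : 0 ≤ Ma := (abs_nonneg a).trans ha
  have hMb : 0 ≤ Mb := (abs_nonneg b).trans hb
  have hMw : 0 ≤ Mw := (abs_nonneg w).trans hw
  have hMa' : 0 ≤ Ma' := (abs_nonneg a').trans ha'
  calc _ ≤ |w| * E * (|a| * |b|) + E * (|a'| * |b| + |a| * |b'|) := by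
        refine (abs_add_le _ _).trans (add_le_add (le_of_eq ?_) ?_)
        · rw [abs_mul, abs_mul, abs_mul, abs_neg, abs_of_nonneg hE]
        · rw [abs_mul, abs_of_nonneg hE]
          gcongr
          refine (abs_add_le _ _).trans (le_of_eq ?_)
          rw [abs_mul, abs_mul]
    _ ≤ Mw * E * (Ma * Mb) + E * (Ma' * Mb + Ma * Mb') := by gcongr
    _ = _ := by ring

lemma exists_deriv_bound_weight_mul_drift {f κ x : ℝ → ℝ} {R K : ℝ}
    (hfd : Differentiable ℝ f) (hfd2 : Differentiable ℝ (deriv f))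
    (hκd : Differentiable ℝ κ) (hκd2 : Differentiable ℝ (deriv κ))
    (hK : ∀ y, |deriv (deriv κ) y| ≤ K) (hxR : ∀ s, 0 ≤ s → |x s| ≤ R)
    (hxd : ∀ t, 0 ≤ t → ∀ s ∈ Icc 0 t, HasDerivWithinAt x (f (x s) + κ (x s)) (Icc 0 t) s) :
    ∃ K', 0 ≤ K' ∧ ∀ t, 0 ≤ t → ∃ ψ' : ℝ → ℝ,
      (∀ s ∈ Ioo 0 t, HasDerivAt (fun s => Real.exp (∫ u in s..t, (deriv f (x u) + deriv κ (x u)))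
        * (deriv κ (x s) * f (x s))) (ψ' s) s) ∧
      IntervalIntegrable ψ' volume 0 t ∧
      ∀ s ∈ Ioc 0 t, |ψ' s| ≤ K' * Real.exp (∫ u in s..t, (deriv f (x u) + deriv κ (x u))) := by
  obtain ⟨Mf, hMf0, hMf⟩ := exists_abs_le_of_continuous hfd.continuous R
  obtain ⟨Mf', hMf'0, hMf'⟩ := exists_abs_le_of_continuous hfd2.continuous R
  obtain ⟨Mκ, hMκ0, hMκ⟩ := exists_abs_le_of_continuous hκd2.continuous R
  obtain ⟨Mg, hMg0, hMg⟩ := exists_abs_le_of_continuous (hfd.continuous.add hκd.continuous) R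
  have hK0 : 0 ≤ K := (abs_nonneg _).trans (hK 0)
  set K' := (Mf' + Mκ) * (Mκ * Mf) + (K * Mg * Mf + Mκ * (Mf' * Mg)) with hK'
  refine ⟨K', by rw [hK']; positivity, fun t ht => ?_⟩
  set w := fun u => deriv f (x u) + deriv κ (x u)
  set E := fun s => Real.exp (∫ u in s..t, w u)
  have hxc : ContinuousOn x (Icc 0 t) := fun s hs => (hxd t ht s hs).continuousWithinAt
  have hwc : ContinuousOn w (Icc 0 t) :=
    (hfd2.continuous.comp_continuousOn hxc).add (hκd2.continuous.comp_continuousOn hxc)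
  set g := fun s => f (x s) + κ (x s)
  set ψ' := fun s => -w s * E s * (deriv κ (x s) * f (x s)) + E s * (deriv (deriv κ) (x s)
    * g s * f (x s) + deriv κ (x s) * (deriv f (x s) * g s))
  have hE0 : ∀ s, 0 ≤ E s := fun s => (Real.exp_pos _).le
  have hbound : ∀ s ∈ Icc 0 t, |ψ' s| ≤ K' * E s := fun s hs => by
    have hR := hxR s hs.1
    exact abs_neg_mul_mul_add_mul_le (hE0 s)
      ((abs_add_le _ _).trans (add_le_add (hMf' _ hR) (hMκ _ hR))) (hMκ _ hR) (hMf _ hR)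
      (by rw [abs_mul]; gcongr; exacts [hK _, hMg _ hR])
      (by rw [abs_mul]; gcongr; exacts [hMf' _ hR, hMg _ hR])
  refine ⟨ψ', fun s hs => ?_, ?_, fun s hs => hbound s (Ioc_subset_Icc_self hs)⟩
  · have hxs := (hxd t ht s (Ioo_subset_Icc_self hs)).hasDerivAt (Icc_mem_nhds hs.1 hs.2)
    exact (hasDerivAt_exp_integral_left hwc hs).mul
      (((hκd2 (x s)).hasDerivAt.comp s hxs).mul ((hfd (x s)).hasDerivAt.comp s hxs))
  · have hmeas : ∀ {φ : ℝ → ℝ}, ContinuousOn φ (Icc 0 t) →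
        AEStronglyMeasurable φ (volume.restrict (uIoc 0 t)) := fun h => by
      rw [uIoc_of_le ht]
      exact (h.mono Ioc_subset_Icc_self).aestronglyMeasurable measurableSet_Ioc
    have hEc := continuousOn_exp_integral_left ht hwc
    -- `deriv (deriv κ)` need not be continuous, but a derivative is always measurable.
    have hκ'' : AEStronglyMeasurable (fun s => deriv (deriv κ) (x s))
        (volume.restrict (uIoc 0 t)) :=
      ((measurable_deriv _).comp_aemeasurable (hmeas hxc).aemeasurable).aestronglyMeasurable
    have hfc := hmeas (hfd.continuous.comp_continuousOn hxc)
    have hf'c := hmeas (hfd2.continuous.comp_continuousOn hxc)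
    have hκ'c := hmeas (hκd2.continuous.comp_continuousOn hxc)
    have hgc := hmeas ((hfd.continuous.add hκd.continuous).comp_continuousOn hxc)
    refine ((hEc.intervalIntegrable_of_Icc ht).const_mul K').mono_fun' ?_ ?_
    · exact (((hmeas hwc).neg.mul (hmeas hEc)).mul (hκ'c.mul hfc)).add
        ((hmeas hEc).mul (((hκ''.mul hgc).mul hfc).add (hκ'c.mul (hf'c.mul hgc))))
    · rw [uIoc_of_le ht]
      filter_upwards [ae_restrict_mem measurableSet_Ioc] with s hs
      exact hbound s (Ioc_subset_Icc_self hs)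

theorem exists_abs_integral_weight_mul_sampled_drift_le {f κ x : ℝ → ℝ} {R K Cw c : ℝ}
    (hfd : Differentiable ℝ f) (hfd2 : Differentiable ℝ (deriv f))
    (hκd : Differentiable ℝ κ) (hκd2 : Differentiable ℝ (deriv κ))
    (hK : ∀ y, |deriv (deriv κ) y| ≤ K) (hxR : ∀ s, 0 ≤ s → |x s| ≤ R)
    (hxd : ∀ t, 0 ≤ t → ∀ s ∈ Icc 0 t, HasDerivWithinAt x (f (x s) + κ (x s)) (Icc 0 t) s)
    (hEint : ∀ t, 0 ≤ t →
      ∫ s in 0..t, Real.exp (∫ u in s..t, (deriv f (x u) + deriv κ (x u))) ≤ Cw)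
    (hc : 0 ≤ c) :
    ∃ C, 0 < C ∧ ∀ ε δ, 0 < ε → 0 < δ → δ ≤ 1 → ∀ t, 0 ≤ t →
      |∫ s in 0..t, Real.exp (∫ u in s..t, (deriv f (x u) + deriv κ (x u))) *
          ((1 / ε) * deriv κ (x s) * f (x (piD δ s)) * (s - piD δ s)
            - (c / 2) * deriv κ (x s) * f (x s))|
        ≤ C * (|δ / ε - c| + δ ^ 2 / ε) := by
  obtain ⟨Mf, hMf0, hMf⟩ := exists_abs_le_of_continuous hfd.continuous R
  obtain ⟨Mf', hMf'0, hMf'⟩ := exists_abs_le_of_continuous hfd2.continuous R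
  obtain ⟨Mκ, hMκ0, hMκ⟩ := exists_abs_le_of_continuous hκd2.continuous R
  obtain ⟨Mg, hMg0, hMg⟩ := exists_abs_le_of_continuous (hfd.continuous.add hκd.continuous) R
  obtain ⟨K', hK'0, hψ'⟩ := exists_deriv_bound_weight_mul_drift hfd hfd2 hκd hκd2 hK hxR hxd
  have hCw : 0 ≤ Cw := by simpa using hEint 0 le_rfl
  have hfLip : ∀ y z, |y| ≤ R → |z| ≤ R → |f y - f z| ≤ Mf' * |y - z| := fun y z hy hz => by
    simpa only [Real.norm_eq_abs] using (convex_Icc (-R) R).norm_image_sub_le_of_norm_deriv_le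
      (fun r _ => hfd r) (fun r hr => hMf' r (abs_le.2 hr)) (abs_le.1 hz) (abs_le.1 hy)
  refine ⟨Mκ * (Mf' * Mg) * Cw + Mκ * Mf * Cw + (Mκ * Mf + K' * Cw) / 8 + 1, by positivity,
    fun ε δ hε hδ hδ1 t ht => ?_⟩
  set w := fun u => deriv f (x u) + deriv κ (x u)
  have hxc : ContinuousOn x (Icc 0 t) := fun s hs => (hxd t ht s hs).continuousWithinAt
  have hwc : ContinuousOn w (Icc 0 t) :=
    (hfd2.continuous.comp_continuousOn hxc).add (hκd2.continuous.comp_continuousOn hxc)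
  obtain ⟨ψ', hψ'd, hψ'i, hψ'E⟩ := hψ' t ht
  have hF : ∀ s ∈ Ioc 0 t, |f (x (piD δ s)) - f (x s)| ≤ Mf' * Mg * δ := fun s hs => by
    have hπ := piD_nonneg hδ hs.1.le
    calc |f (x (piD δ s)) - f (x s)| ≤ Mf' * |x s - x (piD δ s)| := by
          rw [abs_sub_comm (x s)]
          exact hfLip _ _ (hxR _ hπ) (hxR _ hs.1.le)
      _ ≤ Mf' * (Mg * δ) := by
          gcongr
          exact abs_sub_comp_piD_le hδ hs.1.le (hxd s hs.1.le) fun r hr => hMg _ (hxR r hr.1)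
      _ = Mf' * Mg * δ := by ring
  have key := abs_integral_weight_mul_sampled_sub_le hε hδ hc ht (by positivity) hK'0
    (fun s => (Real.exp_pos _).le) (continuousOn_exp_integral_left ht hwc) (by simp) (hEint t ht)
    (fun s hs => hMκ _ (hxR s hs.1)) (fun s hs => hMf _ (hxR s hs.1)) hF
    ((continuousOn_exp_integral_left ht hwc).mul ((hκd2.continuous.comp_continuousOn hxc).mul
      (hfd.continuous.comp_continuousOn hxc))) hψ'd hψ'i hψ'E
  have hcδ := mul_le_abs_div_sub_add_sq_div (c := c) hε hδ.le hδ1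
  refine key.trans ?_
  have hu := abs_nonneg (δ / ε - c)
  have hv : 0 ≤ δ ^ 2 / ε := by positivity
  have hA : 0 ≤ Mκ * (Mf' * Mg) * Cw * |δ / ε - c| := by positivity
  have hB : 0 ≤ Mκ * Mf * Cw * (δ ^ 2 / ε) := by positivity
  nlinarith [mul_le_mul_of_nonneg_left hcδ (by positivity : 0 ≤ (Mκ * Mf + K' * Cw) / 8)]

theorem stmt5_general
    (f κ : ℝ → ℝ) (x₀ : ℝ) (x : ℝ → ℝ)
    -- Assumption (A1)
    (lam γ : ℝ)
    (hlam : 0 < lam)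
    (hcontr : ∀ a b : ℝ, (a - b) * (f a - f b) ≤ -lam * (a - b) ^ 2)
    (hκbd : ∀ a : ℝ, |κ a| ≤ γ)
    -- Assumption (A3)
    (hfd : Differentiable ℝ f) (hfd2 : Differentiable ℝ (deriv f))
    (hκd : Differentiable ℝ κ) (hκd2 : Differentiable ℝ (deriv κ))
    (K : ℝ) (hK : ∀ y : ℝ, |deriv (deriv κ) y| ≤ K)
    (Cstar : ℝ)
    (hint : ∀ m : ℕ, (m = 1 ∨ m = 2) → ∀ t : ℝ, 0 ≤ t →
      (∫ s in (0:ℝ)..t,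
        Real.exp ((m : ℝ) * ∫ u in s..t, (deriv f (x u) + deriv κ (x u)))) ≤ Cstar)
    -- the closed-loop ODE `dx/dt = f(x) + κ(x)`, `x(0) = x₀`
    (hx : ∀ t : ℝ, 0 ≤ t → x t = x₀ + ∫ s in (0:ℝ)..t, (f (x s) + κ (x s)))
    :
    ∀ p : ℕ, 1 ≤ p → ∀ c : ℝ, 0 ≤ c →
      ∃ C : ℝ, 0 < C ∧ ∀ ε δ : ℝ, 0 < ε → ε < 1 → 0 < δ → δ < 1 → ∀ t : ℝ, 0 ≤ t →
        |∫ s in (0:ℝ)..t,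
            Real.exp (∫ u in s..t, (deriv f (x u) + deriv κ (x u))) *
              ((1 / ε) * deriv κ (x s) * f (x (piD δ s)) * (s - piD δ s)
                - (c / 2) * deriv κ (x s) * f (x s))| ^ p
          ≤ C * |δ / ε - c| ^ p + C * δ ^ (2 * p) / ε ^ p := by
  intro p _ c hc
  have hφ : Continuous fun y => f y + κ y := hfd.continuous.add hκd.continuous
  -- the `+ 1` makes both `|x₀| < R` and the inward pointing on `|y| = R` strict
  set R := max |x₀| ((|f 0| + γ) / lam) + 1
  have hR : |x₀| < R := by linarith [le_max_left |x₀| ((|f 0| + γ) / lam)]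
  have hout : ∀ y, |y| = R → y * (f y + κ y) < 0 := fun y hy =>
    mul_add_lt_zero_of_lt_abs hlam hcontr hκbd
      (by linarith [le_max_right |x₀| ((|f 0| + γ) / lam)])
  have hxd : ∀ t, 0 ≤ t → ∀ s ∈ Icc 0 t, HasDerivWithinAt x (f (x s) + κ (x s)) (Icc 0 t) s :=
    fun t ht s hs => hasDerivWithinAt_of_eq_add_integral hφ hx ht
      (intervalIntegrable_of_eq_add_integral hφ hx hR hout ht) hs
  obtain ⟨C, hC, hbound⟩ := exists_abs_integral_weight_mul_sampled_drift_le hfd hfd2 hκd hκd2 hK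
    (fun s hs => abs_le_of_eq_add_integral hφ hx hR hout hs) hxd
    (by simpa using hint 1 (Or.inl rfl)) hc
  refine ⟨2 ^ p * C ^ p, by positivity, fun ε δ hε _ hδ hδ1 t ht => ?_⟩
  have := pow_le_two_pow_mul_add (abs_nonneg _) hC.le (abs_nonneg _) (by positivity)
    (hbound ε δ hε hδ hδ1.le t ht) p
  rwa [div_pow, ← pow_mul, ← mul_div_assoc] at this

/-- Uniform-in-time bound for the term `M₁^{ε,δ}` against the effective
drift `(c/2)·κ'(x)·f(x)`, where `M₁^{ε,δ}(s) = (1/ε)·κ'(x(s))·f(x(π_δ(s)))·(s − π_δ(s))`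
and `E(s,t) = exp(∫ₛᵗ (f'(x(u)) + κ'(x(u))) du)`. -/
theorem stmt5
    (f κ : ℝ → ℝ) (x₀ : ℝ) (x : ℝ → ℝ)
    -- Assumption (A1)
    (lam ξ μ Lκ γ : ℝ) (q : ℕ)
    (hlam : 0 < lam) (hξ : 0 < ξ) (hμ : 0 < μ) (hLκ : 0 < Lκ) (hγ : 0 < γ)
    (hcontr : ∀ a b : ℝ, (a - b) * (f a - f b) ≤ -lam * (a - b) ^ 2)
    (hfLip : ∀ a b : ℝ, |f a - f b| ≤ (ξ * (|a| ^ q + |b| ^ q) + μ) * |a - b|)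
    (hκLip : ∀ a b : ℝ, |κ a - κ b| ≤ Lκ * |a - b|)
    (hgap : lam / 2 - Lκ > 0)
    (hκbd : ∀ a : ℝ, |κ a| ≤ γ)
    -- Assumption (A3)
    (hfd : Differentiable ℝ f) (hfd2 : Differentiable ℝ (deriv f))
    (hκd : Differentiable ℝ κ) (hκd2 : Differentiable ℝ (deriv κ))
    (K : ℝ) (hK : ∀ y : ℝ, |deriv (deriv κ) y| ≤ K)
    (cf : ℝ) (rf : ℕ) (hf2 : ∀ y : ℝ, |deriv (deriv f) y| ≤ cf * (1 + |y| ^ rf))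
    (Cstar : ℝ) (hCstar : 0 < Cstar)
    (hint : ∀ m : ℕ, (m = 1 ∨ m = 2) → ∀ t : ℝ, 0 ≤ t →
      (∫ s in (0:ℝ)..t,
        Real.exp ((m : ℝ) * ∫ u in s..t, (deriv f (x u) + deriv κ (x u)))) ≤ Cstar)
    -- the closed-loop ODE `dx/dt = f(x) + κ(x)`, `x(0) = x₀`
    (hx : ∀ t : ℝ, 0 ≤ t → x t = x₀ + ∫ s in (0:ℝ)..t, (f (x s) + κ (x s)))
    :
    ∀ p : ℕ, 1 ≤ p → ∀ c : ℝ, 0 ≤ c →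
      ∃ C : ℝ, 0 < C ∧ ∀ ε δ : ℝ, 0 < ε → ε < 1 → 0 < δ → δ < 1 → ∀ t : ℝ, 0 ≤ t →
        |∫ s in (0:ℝ)..t,
            Real.exp (∫ u in s..t, (deriv f (x u) + deriv κ (x u))) *
              ((1 / ε) * deriv κ (x s) * f (x (piD δ s)) * (s - piD δ s)
                - (c / 2) * deriv κ (x s) * f (x s))| ^ p
          ≤ C * |δ / ε - c| ^ p + C * δ ^ (2 * p) / ε ^ p :=
  stmt5_general f κ x₀ x lam γ hlam hcontr hκbd hfd hfd2 hκd hκd2 K hK Cstar hint hx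
end

section
/- Under Assumptions (A1) and (A3), define for δ > 0 and t ≥ 0: 𝓡₁^δ(t) := Σ_{i=0}^{⌊t/δ⌋−1} ∫_{iδ}^{(i+1)δ} κ'(x(iδ))·f(x(iδ))·( ∫_s^{(i+1)δ} −(f'(x(u)) + κ'(x(u)))·E(u,t) du ) ds. Then for every integer p ≥ 1 there exists a constant C > 0, independent of t and δ, such that |𝓡₁^δ(t)|^p ≤ C·δ^p for all δ ∈ (0,1) and all t ≥ 0. -/
/-!
Contractivity of `f` and the small Lipschitz constant of `κ` give `f' + κ' ≤ -λ/2`, so the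
weight `E(u, t)` decays like `exp (-λ (t - u) / 2)`. Since `y · (f y + κ y) ≤ 0` once
`|y| > R := (|f 0| + γ) / λ`, the square `x²` never exceeds `max (x₀², R²)`: the trajectory stays
in a compact interval, on which `f` and `f'` are bounded. Each summand of `𝓡₁^δ(t)` is therefore
`O(δ² exp (-λ (t - (i + 1) δ) / 2))`, and the geometric series sums these to `O(δ)` uniformly
in `t`.
-/

open Set MeasureTheory intervalIntegral

theorem image_le_of_hasDerivAt_nonpos_of_gt {φ φ' : ℝ → ℝ} {a b c : ℝ} (hab : a ≤ b)
    (hφ : ContinuousOn φ (Icc a b)) (hφ' : ∀ s ∈ Ioo a b, HasDerivAt φ (φ' s) s)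
    (hneg : ∀ s ∈ Ioo a b, c < φ s → φ' s ≤ 0) (ha : φ a ≤ c) : φ b ≤ c := by
  -- `τ` is the last time in `[a, b]` at which `φ ≤ c`; after it `φ` can only decrease.
  have hK : IsCompact (Icc a b ∩ φ ⁻¹' Iic c) := isCompact_Icc.of_isClosed_subset
    (hφ.preimage_isClosed_of_isClosed isClosed_Icc isClosed_Iic) inter_subset_left
  obtain ⟨⟨hτa, hτb⟩, hτc⟩ := hK.sSup_mem ⟨a, ⟨le_rfl, hab⟩, ha⟩
  set τ := sSup (Icc a b ∩ φ ⁻¹' Iic c)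
  have hgt : ∀ s ∈ Ioo τ b, c < φ s := fun s hs => by
    by_contra! h
    exact hs.1.not_ge (le_csSup hK.bddAbove ⟨⟨hτa.trans hs.1.le, hs.2.le⟩, h⟩)
  have hanti : AntitoneOn φ (Icc τ b) := by
    refine antitoneOn_of_hasDerivWithinAt_nonpos (convex_Icc τ b)
      (hφ.mono (Icc_subset_Icc hτa le_rfl)) (f' := φ') ?_ ?_ <;> rw [interior_Icc] <;>
      intro s hs
    · exact (hφ' s ⟨hτa.trans_lt hs.1, hs.2⟩).hasDerivWithinAt
    · exact hneg s ⟨hτa.trans_lt hs.1, hs.2⟩ (hgt s hs)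
  exact (hanti ⟨le_rfl, hτb⟩ ⟨hτb, le_rfl⟩ hτb).trans hτc

def IsIntegralSolution (F : ℝ → ℝ) (x₀ : ℝ) (x : ℝ → ℝ) : Prop :=
  ∀ t, 0 ≤ t → x t = x₀ + ∫ s in (0 : ℝ)..t, F (x s)

namespace IsIntegralSolution

variable {F : ℝ → ℝ} {x₀ : ℝ} {x : ℝ → ℝ} {T : ℝ}

theorem apply_zero (hx : IsIntegralSolution F x₀ x) : x 0 = x₀ := by
  simpa using hx 0 le_rfl

theorem continuousOn_Icc_of_intervalIntegrable (hx : IsIntegralSolution F x₀ x) (hT : 0 ≤ T)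
    (hI : IntervalIntegrable (fun s => F (x s)) volume 0 T) : ContinuousOn x (Icc 0 T) := by
  have hprim := continuousOn_primitive_interval (a := 0) (b := T)
    (by rw [uIcc_of_le hT]; exact (intervalIntegrable_iff_integrableOn_Icc_of_le hT).1 hI)
  rw [uIcc_of_le hT] at hprim
  exact (continuousOn_const.add hprim).congr fun t ht => hx t ht.1

theorem hasDerivAt_of_intervalIntegrable (hx : IsIntegralSolution F x₀ x) (hF : Continuous F)
    (hI : IntervalIntegrable (fun s => F (x s)) volume 0 T) {s : ℝ} (hs : s ∈ Ioo 0 T) :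
    HasDerivAt x (F (x s)) s := by
  have hT : 0 ≤ T := hs.1.le.trans hs.2.le
  have hcont : ContinuousOn (fun s => F (x s)) (Icc 0 T) :=
    hF.comp_continuousOn (hx.continuousOn_Icc_of_intervalIntegrable hT hI)
  have hnhds : Icc 0 T ∈ nhds s := Icc_mem_nhds hs.1 hs.2
  have hprim : HasDerivAt (fun t => ∫ r in (0 : ℝ)..t, F (x r)) (F (x s)) s :=
    integral_hasDerivAt_right
      (hI.mono_set (uIcc_subset_uIcc_left (Icc_subset_uIcc ⟨hs.1.le, hs.2.le⟩)))
      ⟨Icc 0 T, hnhds, hcont.aestronglyMeasurable measurableSet_Icc⟩ (hcont.continuousAt hnhds)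
  refine (hprim.const_add x₀).congr_of_eventuallyEq ?_
  filter_upwards [Ioi_mem_nhds hs.1] with t ht using hx t ht.le

theorem eq_of_not_intervalIntegrable (hx : IsIntegralSolution F x₀ x) {t : ℝ} (ht : 0 ≤ t)
    (hI : ¬IntervalIntegrable (fun s => F (x s)) volume 0 t) : x t = x₀ := by
  rw [hx t ht, integral_undef hI, add_zero]

section Dissipative

variable {R : ℝ}

theorem abs_le (hx : IsIntegralSolution F x₀ x) (hF : Continuous F)
    (hR : ∀ y, R < |y| → y * F y ≤ 0) {t : ℝ} (ht : 0 ≤ t) : |x t| ≤ max |x₀| R := by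
  by_cases hI : IntervalIntegrable (fun s => F (x s)) volume 0 t
  swap
  · rw [hx.eq_of_not_intervalIntegrable ht hI]
    exact le_max_left _ _
  set B := max |x₀| R
  have hB : 0 ≤ B := (abs_nonneg _).trans (le_max_left _ _)
  refine abs_le_of_sq_le_sq ?_ hB
  refine image_le_of_hasDerivAt_nonpos_of_gt (φ := fun s => x s ^ 2) ht
    ((hx.continuousOn_Icc_of_intervalIntegrable ht hI).pow 2)
    (φ' := fun s => 2 * x s * F (x s))
    (fun s hs => by simpa using (hx.hasDerivAt_of_intervalIntegrable hF hI hs).fun_pow 2)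
    (fun s _ hs => ?_) ?_
  · have hBs : B < |x s| := by simpa [abs_of_nonneg hB] using sq_lt_sq.1 hs
    nlinarith [hR _ ((le_max_right _ _).trans_lt hBs)]
  · rw [hx.apply_zero, ← sq_abs]
    exact pow_le_pow_left₀ (abs_nonneg _) (le_max_left _ _) 2

theorem exists_abs_comp_le (hx : IsIntegralSolution F x₀ x) (hF : Continuous F)
    (hR : ∀ y, R < |y| → y * F y ≤ 0) {φ : ℝ → ℝ} (hφ : Continuous φ) :
    ∃ M, ∀ t, 0 ≤ t → |φ (x t)| ≤ M := by
  obtain ⟨M, hM⟩ :=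
    (isCompact_Icc (a := -max |x₀| R) (b := max |x₀| R)).exists_bound_of_continuousOn
      hφ.continuousOn
  exact ⟨M, fun t ht => hM _ (_root_.abs_le.1 (hx.abs_le hF hR ht))⟩

theorem intervalIntegrable (hx : IsIntegralSolution F x₀ x) (hF : Continuous F)
    (hR : ∀ y, R < |y| → y * F y ≤ 0) (hT : 0 ≤ T) :
    IntervalIntegrable (fun s => F (x s)) volume 0 T := by
  -- Beyond the supremum `τ` of the times up to which `F ∘ x` is integrable, the integral in
  -- `hx` is junk, so `x = x₀` there; before `τ`, `x` is a bounded continuous solution.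
  by_contra hT₀
  set G := {T' | 0 ≤ T' ∧ IntervalIntegrable (fun s => F (x s)) volume 0 T'}
  have hGT : ∀ T' ∈ G, T' ≤ T := fun T' hT' => not_lt.1 fun h =>
    hT₀ (hT'.2.mono_set (uIcc_subset_uIcc_left (Icc_subset_uIcc ⟨hT, h.le⟩)))
  have hbdd : BddAbove G := ⟨T, hGT⟩
  have h0G : (0 : ℝ) ∈ G := ⟨le_rfl, .refl⟩
  set τ := sSup G
  have hτ : 0 ≤ τ := le_csSup hbdd h0G
  have hτT : τ ≤ T := csSup_le ⟨0, h0G⟩ hGT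
  obtain ⟨K, hK⟩ := hx.exists_abs_comp_le hF hR hF
  have hcont : ContinuousOn (fun s => F (x s)) (Ioo 0 τ) := fun s hs => by
    obtain ⟨T', hT'G, hsT'⟩ := exists_lt_of_lt_csSup ⟨0, h0G⟩ hs.2
    exact (hF.continuousAt.comp (hx.hasDerivAt_of_intervalIntegrable hF hT'G.2
      ⟨hs.1, hsT'⟩).continuousAt).continuousWithinAt
  have hbefore : IntervalIntegrable (fun s => F (x s)) volume 0 τ := by
    refine (intervalIntegrable_iff_integrableOn_Icc_of_le hτ).2
      ((integrableOn_Icc_iff_integrableOn_Ioo).2 ?_)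
    exact Integrable.of_bound (hcont.aestronglyMeasurable measurableSet_Ioo) K
      ((ae_restrict_iff' measurableSet_Ioo).2 (.of_forall fun s hs => hK s hs.1.le))
  have hafter : IntervalIntegrable (fun s => F (x s)) volume τ T := by
    refine (intervalIntegrable_iff_integrableOn_Ioc_of_le hτT).2
      ((integrableOn_const (C := F x₀) measure_Ioc_lt_top.ne).congr_fun (fun s hs => ?_)
        measurableSet_Ioc)
    refine congrArg F (hx.eq_of_not_intervalIntegrable (hτ.trans hs.1.le) fun hI => ?_).symm
    exact hs.1.not_ge (le_csSup hbdd ⟨hτ.trans hs.1.le, hI⟩)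
  exact hT₀ (hbefore.trans hafter)

theorem continuousOn_Icc (hx : IsIntegralSolution F x₀ x) (hF : Continuous F)
    (hR : ∀ y, R < |y| → y * F y ≤ 0) (hT : 0 ≤ T) : ContinuousOn x (Icc 0 T) :=
  hx.continuousOn_Icc_of_intervalIntegrable hT (hx.intervalIntegrable hF hR hT)

theorem integrableOn_comp (hx : IsIntegralSolution F x₀ x) (hF : Continuous F)
    (hR : ∀ y, R < |y| → y * F y ≤ 0) {φ : ℝ → ℝ} (hφ : Measurable φ) {M : ℝ}
    (hM : ∀ t, 0 ≤ t → |φ (x t)| ≤ M) (hT : 0 ≤ T) :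
    IntegrableOn (fun t => φ (x t)) (Icc 0 T) :=
  Integrable.of_bound (hφ.comp_aemeasurable
      ((hx.continuousOn_Icc hF hR hT).aemeasurable measurableSet_Icc)).aestronglyMeasurable
    M ((ae_restrict_iff' measurableSet_Icc).2 (.of_forall fun t ht => hM t ht.1))

end Dissipative

end IsIntegralSolution

section ContractiveDrift

variable {f κ : ℝ → ℝ} {lam γ : ℝ}

theorem deriv_le_neg_of_contractive (hfd : Differentiable ℝ f)
    (hcontr : ∀ a b : ℝ, (a - b) * (f a - f b) ≤ -lam * (a - b) ^ 2) (y : ℝ) :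
    deriv f y ≤ -lam := by
  have hanti : Antitone fun z => f z + lam * z := by
    intro a b hab
    rcases hab.eq_or_lt with rfl | hlt
    · rfl
    nlinarith [hcontr b a]
  have := ((hfd y).hasDerivAt.add ((hasDerivAt_id' y).const_mul lam)).nonpos_of_antitone hanti
  linarith

theorem mul_add_nonpos_of_lt_abs (hlam : 0 < lam)
    (hcontr : ∀ a b : ℝ, (a - b) * (f a - f b) ≤ -lam * (a - b) ^ 2)
    (hκbd : ∀ a : ℝ, |κ a| ≤ γ) (y : ℝ) (hy : (|f 0| + γ) / lam < |y|) :
    y * (f y + κ y) ≤ 0 := by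
  rw [div_lt_iff₀ hlam] at hy
  have hf0 : y * f 0 ≤ |y| * |f 0| := (le_abs_self _).trans (abs_mul _ _).le
  have hκ : y * κ y ≤ |y| * γ := (le_abs_self _).trans
    ((abs_mul _ _).trans_le (mul_le_mul_of_nonneg_left (hκbd y) (abs_nonneg y)))
  nlinarith [hcontr y 0, sq_abs y, abs_nonneg y]

theorem abs_deriv_le_of_abs_sub_le {L : ℝ} (hκ : ∀ a b : ℝ, |κ a - κ b| ≤ L * |a - b|) (y : ℝ) :
    |deriv κ y| ≤ L :=
  (norm_deriv_le_of_lipschitz (LipschitzWith.of_dist_le' (f := κ) hκ) (x₀ := y)).trans_eq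
    (Real.coe_toNNReal _ (by simpa using (abs_nonneg _).trans (hκ 1 0)))

end ContractiveDrift

/-- `𝓡₁^δ(t)` for `c = κ'(x) f(x)` and `g = f'(x) + κ'(x)`, so that `E(u, t) = exp ∫ᵤᵗ g`. -/
noncomputable def samplingRemainder (c g : ℝ → ℝ) (δ t : ℝ) : ℝ :=
  ∑ i ∈ Finset.range (⌊t / δ⌋).toNat,
    ∫ s in ((i : ℝ) * δ)..(((i : ℝ) + 1) * δ),
      c ((i : ℝ) * δ) * ∫ u in s..(((i : ℝ) + 1) * δ), -g u * Real.exp (∫ r in u..t, g r)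

theorem sum_exp_neg_mul_le {ν δ t : ℝ} {N : ℕ} (hν : 0 < ν) (hδ : 0 < δ) (hN : N * δ ≤ t) :
    ∑ i ∈ Finset.range N, Real.exp (-ν * (t - (i + 1) * δ)) ≤ Real.exp (ν * δ) / (ν * δ) := by
  have hq : 1 < Real.exp (ν * δ) := Real.one_lt_exp_iff.2 (by positivity)
  calc ∑ i ∈ Finset.range N, Real.exp (-ν * (t - (i + 1) * δ))
      = Real.exp (-ν * (t - δ)) * ∑ i ∈ Finset.range N, Real.exp (ν * δ) ^ i := by
        rw [Finset.mul_sum]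
        refine Finset.sum_congr rfl fun i _ => ?_
        rw [← Real.exp_nat_mul, ← Real.exp_add]
        ring_nf
    _ = Real.exp (-ν * (t - δ)) * ((Real.exp (ν * δ) ^ N - 1) / (Real.exp (ν * δ) - 1)) := by
        rw [geom_sum_eq hq.ne']
    _ ≤ Real.exp (-ν * (t - δ)) * (Real.exp (ν * δ) ^ N / (ν * δ)) := by
        gcongr
        · linarith
        · linarith [Real.add_one_le_exp (ν * δ)]
    _ = Real.exp (-ν * (t - δ) + N * (ν * δ)) / (ν * δ) := by
        rw [Real.exp_add, Real.exp_nat_mul]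
        ring
    _ ≤ Real.exp (ν * δ) / (ν * δ) := by
        gcongr
        nlinarith

section Remainder

variable {c g : ℝ → ℝ} {A M ν : ℝ}

theorem integral_le_neg_mul_sub (hgν : ∀ u, 0 ≤ u → g u ≤ -ν)
    (hgi : ∀ T, 0 ≤ T → IntegrableOn g (Icc 0 T)) {u t : ℝ} (hu : 0 ≤ u) (hut : u ≤ t) :
    ∫ r in u..t, g r ≤ -ν * (t - u) := by
  have hI : IntervalIntegrable g volume u t := (intervalIntegrable_iff_integrableOn_Icc_of_le hut).2
    ((hgi t (hu.trans hut)).mono_set (Icc_subset_Icc hu le_rfl))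
  have := integral_mono_on hut hI intervalIntegrable_const fun r hr => hgν r (hu.trans hr.1)
  rw [intervalIntegral.integral_const, smul_eq_mul] at this
  linarith

theorem abs_integral_neg_mul_exp_le (hν : 0 ≤ ν) (hgM : ∀ u, 0 ≤ u → |g u| ≤ M)
    (hgν : ∀ u, 0 ≤ u → g u ≤ -ν) (hgi : ∀ T, 0 ≤ T → IntegrableOn g (Icc 0 T)) {s b t : ℝ}
    (hs : 0 ≤ s) (hsb : s ≤ b) (hbt : b ≤ t) :
    |∫ u in s..b, -g u * Real.exp (∫ r in u..t, g r)| ≤ M * Real.exp (-ν * (t - b)) * (b - s) := by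
  have hM : 0 ≤ M := (abs_nonneg _).trans (hgM 0 le_rfl)
  have h := norm_integral_le_of_norm_le_const (a := s) (b := b)
    (f := fun u => -g u * Real.exp (∫ r in u..t, g r)) (C := M * Real.exp (-ν * (t - b))) ?_
  · rwa [Real.norm_eq_abs, abs_of_nonneg (sub_nonneg.2 hsb)] at h
  intro u hu
  rw [uIoc_of_le hsb] at hu
  have hu0 : 0 ≤ u := hs.trans hu.1.le
  have hexp : Real.exp (∫ r in u..t, g r) ≤ Real.exp (-ν * (t - b)) := by
    refine Real.exp_le_exp.2 ((integral_le_neg_mul_sub hgν hgi hu0 (hu.2.trans hbt)).trans ?_)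
    nlinarith [hu.2]
  rw [Real.norm_eq_abs, abs_mul, abs_neg, Real.abs_exp]
  exact mul_le_mul (hgM u hu0) hexp (Real.exp_nonneg _) hM

theorem abs_integral_mul_integral_le (hν : 0 ≤ ν) (hc : ∀ a, 0 ≤ a → |c a| ≤ A)
    (hgM : ∀ u, 0 ≤ u → |g u| ≤ M) (hgν : ∀ u, 0 ≤ u → g u ≤ -ν)
    (hgi : ∀ T, 0 ≤ T → IntegrableOn g (Icc 0 T)) {a b t : ℝ} (ha : 0 ≤ a) (hab : a ≤ b)
    (hbt : b ≤ t) :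
    |∫ s in a..b, c a * ∫ u in s..b, -g u * Real.exp (∫ r in u..t, g r)|
      ≤ A * M * (b - a) ^ 2 * Real.exp (-ν * (t - b)) := by
  have hA : 0 ≤ A := (abs_nonneg _).trans (hc 0 le_rfl)
  have hM : 0 ≤ M := (abs_nonneg _).trans (hgM 0 le_rfl)
  have h := norm_integral_le_of_norm_le_const (a := a) (b := b)
    (C := A * (M * Real.exp (-ν * (t - b)) * (b - a)))
    (f := fun s => c a * ∫ u in s..b, -g u * Real.exp (∫ r in u..t, g r)) ?_
  · rw [Real.norm_eq_abs, abs_of_nonneg (sub_nonneg.2 hab)] at h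
    linarith
  intro s hs
  rw [uIoc_of_le hab] at hs
  rw [Real.norm_eq_abs, abs_mul]
  refine mul_le_mul (hc a ha) ?_ (abs_nonneg _) hA
  refine (abs_integral_neg_mul_exp_le hν hgM hgν hgi (ha.trans hs.1.le) hs.2 hbt).trans ?_
  gcongr
  exact hs.1.le

theorem abs_samplingRemainder_le (hν : 0 < ν) (hc : ∀ a, 0 ≤ a → |c a| ≤ A)
    (hgM : ∀ u, 0 ≤ u → |g u| ≤ M) (hgν : ∀ u, 0 ≤ u → g u ≤ -ν)
    (hgi : ∀ T, 0 ≤ T → IntegrableOn g (Icc 0 T)) {δ t : ℝ} (hδ : 0 < δ) (ht : 0 ≤ t) :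
    |samplingRemainder c g δ t| ≤ A * M * Real.exp (ν * δ) / ν * δ := by
  have hA : 0 ≤ A := (abs_nonneg _).trans (hc 0 le_rfl)
  have hM : 0 ≤ M := (abs_nonneg _).trans (hgM 0 le_rfl)
  set N := (⌊t / δ⌋).toNat
  have hN : (N : ℝ) * δ ≤ t := by
    have : (N : ℝ) ≤ t / δ := by
      rw [show (N : ℝ) = ((N : ℤ) : ℝ) by norm_cast,
        Int.toNat_of_nonneg (Int.floor_nonneg.2 (by positivity))]
      exact Int.floor_le _
    rwa [le_div_iff₀ hδ] at this
  calc |samplingRemainder c g δ t|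
      ≤ ∑ i ∈ Finset.range N, A * M * δ ^ 2 * Real.exp (-ν * (t - (i + 1) * δ)) := by
        refine (Finset.abs_sum_le_sum_abs _ _).trans (Finset.sum_le_sum fun i hi => ?_)
        have hiN : ((i : ℝ) + 1) * δ ≤ t :=
          le_trans (by gcongr; exact_mod_cast Finset.mem_range.1 hi) hN
        refine (abs_integral_mul_integral_le hν.le hc hgM hgν hgi (by positivity) (by nlinarith)
          hiN).trans_eq ?_
        ring_nf
    _ = A * M * δ ^ 2 * ∑ i ∈ Finset.range N, Real.exp (-ν * (t - (i + 1) * δ)) :=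
        (Finset.mul_sum _ _ _).symm
    _ ≤ A * M * δ ^ 2 * (Real.exp (ν * δ) / (ν * δ)) := by
        gcongr
        exact sum_exp_neg_mul_le hν hδ hN
    _ = A * M * Real.exp (ν * δ) / ν * δ := by
        field_simp

theorem exists_abs_samplingRemainder_le_mul (hν : 0 < ν) (hc : ∀ a, 0 ≤ a → |c a| ≤ A)
    (hgM : ∀ u, 0 ≤ u → |g u| ≤ M) (hgν : ∀ u, 0 ≤ u → g u ≤ -ν)
    (hgi : ∀ T, 0 ≤ T → IntegrableOn g (Icc 0 T)) :
    ∃ C, 0 < C ∧ ∀ δ, 0 < δ → δ < 1 → ∀ t, 0 ≤ t → |samplingRemainder c g δ t| ≤ C * δ := by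
  have hA : 0 ≤ A := (abs_nonneg _).trans (hc 0 le_rfl)
  have hM : 0 ≤ M := (abs_nonneg _).trans (hgM 0 le_rfl)
  refine ⟨A * M * Real.exp ν / ν + 1, by positivity, fun δ hδ hδ1 t ht => ?_⟩
  calc |samplingRemainder c g δ t| ≤ A * M * Real.exp (ν * δ) / ν * δ :=
        abs_samplingRemainder_le hν hc hgM hgν hgi hδ ht
    _ ≤ A * M * Real.exp ν / ν * δ := by
        gcongr
        exact mul_le_of_le_one_right hν.le hδ1.le
    _ ≤ (A * M * Real.exp ν / ν + 1) * δ := by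
        gcongr
        linarith

end Remainder

theorem stmt6_general
    (f κ : ℝ → ℝ) (x₀ : ℝ) (x : ℝ → ℝ)
    -- Assumption (A1)
    (lam Lκ γ : ℝ)
    (hlam : 0 < lam)
    (hcontr : ∀ a b : ℝ, (a - b) * (f a - f b) ≤ -lam * (a - b) ^ 2)
    (hκLip : ∀ a b : ℝ, |κ a - κ b| ≤ Lκ * |a - b|)
    (hgap : lam / 2 - Lκ > 0)
    (hκbd : ∀ a : ℝ, |κ a| ≤ γ)
    -- Assumption (A3)
    (hfd : Differentiable ℝ f) (hfd2 : Differentiable ℝ (deriv f))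
    -- the closed-loop ODE `dx/dt = f(x) + κ(x)`, `x(0) = x₀`
    (hx : ∀ t : ℝ, 0 ≤ t → x t = x₀ + ∫ s in (0:ℝ)..t, (f (x s) + κ (x s)))
    :
    ∀ p : ℕ, 1 ≤ p → ∃ C : ℝ, 0 < C ∧ ∀ δ : ℝ, 0 < δ → δ < 1 → ∀ t : ℝ, 0 ≤ t →
      |∑ i ∈ Finset.range (⌊t / δ⌋).toNat,
          ∫ s in ((i : ℝ) * δ)..(((i : ℝ) + 1) * δ),
            deriv κ (x ((i : ℝ) * δ)) * f (x ((i : ℝ) * δ)) *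
              ∫ u in s..(((i : ℝ) + 1) * δ),
                (-(deriv f (x u) + deriv κ (x u)) *
                  Real.exp (∫ r in u..t, (deriv f (x r) + deriv κ (x r))))| ^ p
        ≤ C * δ ^ p := by
  intro p _
  have hsol : IsIntegralSolution (fun y => f y + κ y) x₀ x := hx
  have hκ' : ∀ y, |deriv κ y| ≤ Lκ := abs_deriv_le_of_abs_sub_le hκLip
  have hF : Continuous fun y => f y + κ y :=
    hfd.continuous.add (LipschitzWith.of_dist_le' hκLip).continuous
  have hdiss := mul_add_nonpos_of_lt_abs hlam hcontr hκbd
  obtain ⟨Mf, hMf⟩ := hsol.exists_abs_comp_le hF hdiss hfd.continuous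
  obtain ⟨Mf', hMf'⟩ := hsol.exists_abs_comp_le hF hdiss hfd2.continuous
  have hc : ∀ a, 0 ≤ a → |deriv κ (x a) * f (x a)| ≤ Lκ * Mf := fun a ha => by
    rw [abs_mul]
    exact mul_le_mul (hκ' _) (hMf a ha) (abs_nonneg _) ((abs_nonneg _).trans (hκ' 0))
  have hgM : ∀ u, 0 ≤ u → |deriv f (x u) + deriv κ (x u)| ≤ Mf' + Lκ := fun u hu =>
    (abs_add_le _ _).trans (add_le_add (hMf' u hu) (hκ' _))
  have hgν : ∀ u, 0 ≤ u → deriv f (x u) + deriv κ (x u) ≤ -(lam / 2) := fun u _ => by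
    linarith [deriv_le_neg_of_contractive hfd hcontr (x u), (abs_le.1 (hκ' (x u))).2]
  have hgi : ∀ T, 0 ≤ T → IntegrableOn (fun u => deriv f (x u) + deriv κ (x u)) (Icc 0 T) :=
    fun T hT => (hsol.integrableOn_comp hF hdiss (measurable_deriv f) hMf' hT).add
      (hsol.integrableOn_comp hF hdiss (measurable_deriv κ) (fun u _ => hκ' (x u)) hT)
  obtain ⟨C, hC, hR⟩ := exists_abs_samplingRemainder_le_mul (by linarith) hc hgM hgν hgi
  refine ⟨C ^ p, by positivity, fun δ hδ hδ1 t ht => ?_⟩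
  rw [← mul_pow]
  exact pow_le_pow_left₀ (abs_nonneg _) (hR δ hδ hδ1 t ht) p

/-- Uniform-in-time bound `|𝓡₁^δ(t)|^p ≤ C·δ^p` for the Riemann-sum
remainder `𝓡₁^δ(t) = Σᵢ ∫_{iδ}^{(i+1)δ} κ'(x(iδ))·f(x(iδ))·
(∫ₛ^{(i+1)δ} −(f'(x(u)) + κ'(x(u)))·E(u,t) du) ds`. -/
theorem stmt6
    (f κ : ℝ → ℝ) (x₀ : ℝ) (x : ℝ → ℝ)
    -- Assumption (A1)
    (lam ξ μ Lκ γ : ℝ) (q : ℕ)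
    (hlam : 0 < lam) (hξ : 0 < ξ) (hμ : 0 < μ) (hLκ : 0 < Lκ) (hγ : 0 < γ)
    (hcontr : ∀ a b : ℝ, (a - b) * (f a - f b) ≤ -lam * (a - b) ^ 2)
    (hfLip : ∀ a b : ℝ, |f a - f b| ≤ (ξ * (|a| ^ q + |b| ^ q) + μ) * |a - b|)
    (hκLip : ∀ a b : ℝ, |κ a - κ b| ≤ Lκ * |a - b|)
    (hgap : lam / 2 - Lκ > 0)
    (hκbd : ∀ a : ℝ, |κ a| ≤ γ)
    -- Assumption (A3)
    (hfd : Differentiable ℝ f) (hfd2 : Differentiable ℝ (deriv f))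
    (hκd : Differentiable ℝ κ) (hκd2 : Differentiable ℝ (deriv κ))
    (K : ℝ) (hK : ∀ y : ℝ, |deriv (deriv κ) y| ≤ K)
    (cf : ℝ) (rf : ℕ) (hf2 : ∀ y : ℝ, |deriv (deriv f) y| ≤ cf * (1 + |y| ^ rf))
    (Cstar : ℝ) (hCstar : 0 < Cstar)
    (hint : ∀ m : ℕ, (m = 1 ∨ m = 2) → ∀ t : ℝ, 0 ≤ t →
      (∫ s in (0:ℝ)..t,
        Real.exp ((m : ℝ) * ∫ u in s..t, (deriv f (x u) + deriv κ (x u)))) ≤ Cstar)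
    -- the closed-loop ODE `dx/dt = f(x) + κ(x)`, `x(0) = x₀`
    (hx : ∀ t : ℝ, 0 ≤ t → x t = x₀ + ∫ s in (0:ℝ)..t, (f (x s) + κ (x s)))
    :
    ∀ p : ℕ, 1 ≤ p → ∃ C : ℝ, 0 < C ∧ ∀ δ : ℝ, 0 < δ → δ < 1 → ∀ t : ℝ, 0 ≤ t →
      |∑ i ∈ Finset.range (⌊t / δ⌋).toNat,
          ∫ s in ((i : ℝ) * δ)..(((i : ℝ) + 1) * δ),
            deriv κ (x ((i : ℝ) * δ)) * f (x ((i : ℝ) * δ)) *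
              ∫ u in s..(((i : ℝ) + 1) * δ),
                (-(deriv f (x u) + deriv κ (x u)) *
                  Real.exp (∫ r in u..t, (deriv f (x r) + deriv κ (x r))))| ^ p
        ≤ C * δ ^ p :=
  stmt6_general f κ x₀ x lam Lκ γ hlam hcontr hκLip hgap hκbd hfd hfd2 hx
end

section
/- Under Assumptions (A1) and (A3), define for δ > 0 and t ≥ 0: 𝓡₂^δ(t) := Σ_{i=0}^{⌊t/δ⌋−1} ∫_{iδ}^{(i+1)δ} ( κ'(x(iδ)) − κ'(x(s)) )·f(x(iδ))·E(s,t) ds and 𝓡₃^δ(t) := Σ_{i=0}^{⌊t/δ⌋−1} ∫_{iδ}^{(i+1)δ} κ'(x(s))·( f(x(iδ)) − f(x(s)) )·E(s,t) ds. Then for every integer p ≥ 1 there exists a constant C > 0, independent of t and δ, such that |𝓡₂^δ(t)|^p + |𝓡₃^δ(t)|^p ≤ C·δ^p for all δ ∈ (0,1) and all t ≥ 0. -/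
/-!
Dissipativity of `f + κ`, which follows from the one-sided Lipschitz condition on `f` and the
boundedness of `κ`, confines the closed-loop trajectory to a fixed interval `[-R, R]`, and the
equation then makes it Lipschitz in time. On `[-R, R]` the `C¹` map `f` is bounded and Lipschitz,
and `κ'` is globally Lipschitz because `κ''` is bounded; hence on the `i`-th sampling interval both
integrands are `O(s - iδ) · E(s, t) = O(δ) · E(s, t)`. The integrals of `E(·, t)` over the
sampling intervals add up to at most `∫₀ᵗ E(s, t) ds ≤ C_*`, so `|𝓡₂^δ(t)|, |𝓡₃^δ(t)| ≤ c C_* δ`.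
-/

open Set Filter MeasureTheory Finset
open scoped NNReal

section IntegralEquation

variable {g x : ℝ → ℝ} {x₀ T : ℝ}

theorem continuousOn_Icc_of_integral_eq
    (hx : ∀ t, 0 ≤ t → x t = x₀ + ∫ s in (0 : ℝ)..t, g s) (hT : 0 ≤ T)
    (hg : IntervalIntegrable g volume 0 T) : ContinuousOn x (Icc 0 T) := by
  have h := (intervalIntegral.continuousOn_primitive_interval' hg left_mem_uIcc).const_add x₀
  rw [uIcc_of_le hT] at h
  exact h.congr fun t ht => hx t ht.1

theorem hasDerivWithinAt_Icc_of_integral_eq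
    (hx : ∀ t, 0 ≤ t → x t = x₀ + ∫ s in (0 : ℝ)..t, g s) (hg : ContinuousOn g (Icc 0 T))
    {t : ℝ} (ht : t ∈ Icc 0 T) : HasDerivWithinAt x (g t) (Icc 0 T) t := by
  have : Fact (t ∈ Icc 0 T) := ⟨ht⟩ -- provides the `FTCFilter` instance for `Icc 0 T`
  refine HasDerivWithinAt.congr ?_ (fun s hs => hx s hs.1) (hx t ht.1)
  refine (intervalIntegral.integral_hasDerivWithinAt_right ?_
    (hg.stronglyMeasurableAtFilter_nhdsWithin measurableSet_Icc t) (hg t ht)).const_add x₀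
  exact (hg.mono (uIcc_subset_Icc ⟨le_rfl, ht.1.trans ht.2⟩ ht)).intervalIntegrable

theorem abs_sub_le_of_integral_eq {M : ℝ}
    (hx : ∀ t, 0 ≤ t → x t = x₀ + ∫ s in (0 : ℝ)..t, g s)
    (hg : ∀ T, 0 ≤ T → IntervalIntegrable g volume 0 T) (hM : ∀ t, 0 ≤ t → |g t| ≤ M)
    {s t : ℝ} (hs : 0 ≤ s) (hst : s ≤ t) : |x t - x s| ≤ M * (t - s) := by
  have ht : 0 ≤ t := hs.trans hst
  have hdiff : x t - x s = ∫ u in s..t, g u := by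
    rw [hx t ht, hx s hs, ← intervalIntegral.integral_interval_sub_left (hg t ht) (hg s hs)]
    ring
  rw [hdiff, ← abs_of_nonneg (sub_nonneg.2 hst)]
  refine intervalIntegral.norm_integral_le_of_norm_le_const (f := g) fun u hu => ?_
  rw [uIoc_of_le hst] at hu
  exact hM u (hs.trans hu.1.le)

variable {F : ℝ → ℝ} {R : ℝ}

/-- Fencing: `x ^ 2` has negative right derivative wherever it reaches `R ^ 2`. -/
theorem abs_le_of_integral_eq_of_intervalIntegrable (hF : Continuous F)
    (hx : ∀ t, 0 ≤ t → x t = x₀ + ∫ s in (0 : ℝ)..t, F (x s)) (hx₀ : |x₀| ≤ R)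
    (hdiss : ∀ y, R ≤ |y| → y * F y < 0) (hT : 0 ≤ T)
    (hg : IntervalIntegrable (fun s => F (x s)) volume 0 T) : ∀ t ∈ Icc 0 T, |x t| ≤ R := by
  have hR : 0 ≤ R := (abs_nonneg _).trans hx₀
  have hxc := continuousOn_Icc_of_integral_eq hx hT hg
  have hgc : ContinuousOn (fun s => F (x s)) (Icc 0 T) := hF.comp_continuousOn hxc
  have hx0 : x 0 = x₀ := by simpa using hx 0 le_rfl
  have hsq : ∀ t ∈ Icc 0 T, x t ^ 2 ≤ R ^ 2 := by
    refine image_le_of_deriv_right_lt_deriv_boundary' (f := fun t => x t ^ 2)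
      (f' := fun s => 2 * x s * F (x s))
      (B' := fun _ => 0) (hxc.pow 2) (fun s hs => ?_) ?_ continuousOn_const
      (fun _ _ => hasDerivWithinAt_const _ _ _) (fun s _ hs => ?_)
    · have h := (hasDerivWithinAt_Icc_of_integral_eq hx hgc (Ico_subset_Icc_self hs)).pow 2
      refine (h.mono_of_mem_nhdsWithin (Icc_mem_nhdsGE_of_mem hs)).congr_deriv ?_
      simp only [Nat.cast_ofNat]
      ring
    · rw [hx0, sq_le_sq, abs_of_nonneg hR]
      exact hx₀
    · have hxs : |x s| = R := by rwa [sq_eq_sq_iff_abs_eq_abs, abs_of_nonneg hR] at hs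
      linarith [hdiss (x s) hxs.ge]
  exact fun t ht => abs_le_of_sq_le_sq (hsq t ht) hR

/-- Where the integral in the equation is undefined, `x` takes the value `x₀`. -/
theorem abs_le_of_integral_eq (hF : Continuous F)
    (hx : ∀ t, 0 ≤ t → x t = x₀ + ∫ s in (0 : ℝ)..t, F (x s)) (hx₀ : |x₀| ≤ R)
    (hdiss : ∀ y, R ≤ |y| → y * F y < 0) {t : ℝ} (ht : 0 ≤ t) : |x t| ≤ R := by
  by_cases hg : IntervalIntegrable (fun s => F (x s)) volume 0 t
  · exact abs_le_of_integral_eq_of_intervalIntegrable hF hx hx₀ hdiss ht hg t ⟨ht, le_rfl⟩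
  · rwa [hx t ht, intervalIntegral.integral_undef hg, add_zero]

theorem intervalIntegrable_of_forall_lt (hF : Continuous F)
    (hx : ∀ t, 0 ≤ t → x t = x₀ + ∫ s in (0 : ℝ)..t, F (x s))
    (hxR : ∀ t, 0 ≤ t → |x t| ≤ R) (hT : 0 ≤ T)
    (h : ∀ t, 0 ≤ t → t < T → IntervalIntegrable (fun s => F (x s)) volume 0 t) :
    IntervalIntegrable (fun s => F (x s)) volume 0 T := by
  obtain ⟨M, hM⟩ := isCompact_Icc.exists_bound_of_continuousOn (hF.continuousOn (s := Icc (-R) R))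
  have hc : ContinuousOn (fun s => F (x s)) (Ioo 0 T) := by
    intro s hs
    obtain ⟨t, hst, htT⟩ := exists_between hs.2
    have hct := hF.comp_continuousOn
      (continuousOn_Icc_of_integral_eq hx (hs.1.trans hst).le (h t (hs.1.trans hst).le htT))
    exact (hct.continuousAt (Icc_mem_nhds hs.1 hst)).continuousWithinAt
  rw [intervalIntegrable_iff_integrableOn_Ioo_of_le hT]
  exact ⟨hc.aestronglyMeasurable measurableSet_Ioo, .restrict_of_bounded (C := M) measure_Ioo_lt_top
    ((ae_restrict_iff' measurableSet_Ioo).2 (ae_of_all _ fun s hs =>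
      hM _ (abs_le.1 (hxR s hs.1.le))))⟩

/-- If `F ∘ x` were integrable on `[0, T]` but on no longer interval, then `x = x₀` right of `T`,
which makes `F ∘ x` integrable a little further. -/
theorem exists_gt_intervalIntegrable
    (hx : ∀ t, 0 ≤ t → x t = x₀ + ∫ s in (0 : ℝ)..t, F (x s)) (hT : 0 ≤ T)
    (hg : IntervalIntegrable (fun s => F (x s)) volume 0 T) :
    ∃ t, T < t ∧ IntervalIntegrable (fun s => F (x s)) volume 0 t := by
  by_contra! hno
  have hconst : ∀ t, T < t → x t = x₀ := fun t ht => by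
    rw [hx t (hT.trans ht.le), intervalIntegral.integral_undef (hno t ht), add_zero]
  refine hno (T + 1) (lt_add_one T)
    (hg.trans ((intervalIntegrable_const (c := F x₀)).congr fun s hs => ?_))
  rw [uIoc_of_le (by linarith)] at hs
  simp only [hconst s hs.1]

theorem intervalIntegrable_of_integral_eq (hF : Continuous F)
    (hx : ∀ t, 0 ≤ t → x t = x₀ + ∫ s in (0 : ℝ)..t, F (x s)) (hx₀ : |x₀| ≤ R)
    (hdiss : ∀ y, R ≤ |y| → y * F y < 0) (hT : 0 ≤ T) :
    IntervalIntegrable (fun s => F (x s)) volume 0 T := by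
  -- the supremum of the times up to which `F ∘ x` is integrable would be such a time, and could
  -- then be exceeded
  by_contra hT'
  set S := {t | 0 ≤ t ∧ IntervalIntegrable (fun s => F (x s)) volume 0 t}
  have hmono : ∀ t ∈ S, ∀ s, 0 ≤ s → s ≤ t → IntervalIntegrable (fun s => F (x s)) volume 0 s :=
    fun t ht s hs hst =>
      ht.2.mono_set (uIcc_subset_uIcc left_mem_uIcc ⟨by simp [hs], by simp [hst]⟩)
  have hbdd : BddAbove S := ⟨T, fun t ht => le_of_not_gt fun hTt => hT' (hmono t ht T hT hTt.le)⟩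
  have h0 : (0 : ℝ) ∈ S := ⟨le_rfl, IntervalIntegrable.refl⟩
  have hsup : 0 ≤ sSup S := le_csSup hbdd h0
  have hsupS : sSup S ∈ S := by
    refine ⟨hsup, intervalIntegrable_of_forall_lt hF hx
      (fun t ht => abs_le_of_integral_eq hF hx hx₀ hdiss ht) hsup fun t ht hts => ?_⟩
    obtain ⟨s, hs, hts⟩ := exists_lt_of_lt_csSup ⟨0, h0⟩ hts
    exact hmono s hs t ht hts.le
  obtain ⟨t, hst, ht⟩ := exists_gt_intervalIntegrable hx hsupS.1 hsupS.2
  exact (le_csSup hbdd ⟨hsup.trans hst.le, ht⟩).not_gt hst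

end IntegralEquation

section SampledSums

variable {δ t : ℝ} {N : ℕ}

theorem toNat_floor_div_mul_le (hδ : 0 < δ) (ht : 0 ≤ t) : ((⌊t / δ⌋.toNat : ℕ) : ℝ) * δ ≤ t := by
  rw [Int.floor_toNat, ← le_div_iff₀ hδ]
  exact Nat.floor_le (div_nonneg ht hδ.le)

theorem uIcc_mul_subset_uIcc (hδ : 0 ≤ δ) (hNt : N * δ ≤ t) {i : ℕ} (hi : i < N) :
    uIcc ((i : ℝ) * δ) ((i + 1) * δ) ⊆ uIcc 0 t := by
  have hiN : (i : ℝ) + 1 ≤ N := by exact_mod_cast hi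
  have h0 : (0 : ℝ) ≤ i * δ := by positivity
  have h1 : ((i : ℝ) + 1) * δ ≤ t := (mul_le_mul_of_nonneg_right hiN hδ).trans hNt
  have hle : (i : ℝ) * δ ≤ (i + 1) * δ := by nlinarith
  rw [uIcc_of_le hle, uIcc_of_le (h0.trans (hle.trans h1))]
  exact Icc_subset_Icc h0 h1

theorem sum_integral_sampling_intervals_le {E : ℝ → ℝ} (hδ : 0 ≤ δ) (hNt : N * δ ≤ t)
    (hE0 : ∀ s, 0 ≤ E s) (hE : IntervalIntegrable E volume 0 t) :
    ∑ i ∈ range N, ∫ s in ((i : ℝ) * δ)..((i + 1) * δ), E s ≤ ∫ s in (0 : ℝ)..t, E s := by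
  have hsum := intervalIntegral.sum_integral_adjacent_intervals (a := fun i : ℕ => (i : ℝ) * δ)
    (f := E) (μ := volume) (n := N) fun k hk => hE.mono_set (by
      push_cast
      exact uIcc_mul_subset_uIcc hδ hNt hk)
  push_cast at hsum
  rw [hsum, zero_mul]
  exact intervalIntegral.integral_mono_interval le_rfl (by positivity) hNt
    (ae_of_all _ hE0) hE

theorem abs_sum_integral_mul_le {g : ℕ → ℝ → ℝ} {E : ℝ → ℝ} {c C : ℝ} (hδ : 0 ≤ δ)
    (hNt : N * δ ≤ t) (hE0 : ∀ s, 0 ≤ E s) (hE : IntervalIntegrable E volume 0 t)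
    (hEC : ∫ s in (0 : ℝ)..t, E s ≤ C) (hc : 0 ≤ c)
    (hg : ∀ i < N, ∀ s ∈ Icc ((i : ℝ) * δ) ((i + 1) * δ), |g i s| ≤ c * (s - i * δ)) :
    |∑ i ∈ range N, ∫ s in ((i : ℝ) * δ)..((i + 1) * δ), g i s * E s| ≤ c * δ * C := by
  have hterm : ∀ i ∈ range N, |∫ s in ((i : ℝ) * δ)..((i + 1) * δ), g i s * E s|
      ≤ c * δ * ∫ s in ((i : ℝ) * δ)..((i + 1) * δ), E s := by
    intro i hi
    have hi := mem_range.1 hi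
    rw [← intervalIntegral.integral_const_mul]
    refine intervalIntegral.norm_integral_le_of_norm_le (f := fun s => g i s * E s) (by nlinarith)
      (ae_of_all _ fun s hs => ?_) ((hE.mono_set (uIcc_mul_subset_uIcc hδ hNt hi)).const_mul _)
    have hs' : s ∈ Icc ((i : ℝ) * δ) ((i + 1) * δ) := Ioc_subset_Icc_self hs
    rw [Real.norm_eq_abs, abs_mul, abs_of_nonneg (hE0 s)]
    refine mul_le_mul_of_nonneg_right ((hg i hi s hs').trans ?_) (hE0 s)
    exact mul_le_mul_of_nonneg_left (by linarith [hs'.2]) hc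
  calc |∑ i ∈ range N, ∫ s in ((i : ℝ) * δ)..((i + 1) * δ), g i s * E s|
      ≤ ∑ i ∈ range N, c * δ * ∫ s in ((i : ℝ) * δ)..((i + 1) * δ), E s :=
        (abs_sum_le_sum_abs _ _).trans (sum_le_sum hterm)
    _ = c * δ * ∑ i ∈ range N, ∫ s in ((i : ℝ) * δ)..((i + 1) * δ), E s := (mul_sum ..).symm
    _ ≤ c * δ * C := mul_le_mul_of_nonneg_left
        ((sum_integral_sampling_intervals_le hδ hNt hE0 hE).trans hEC) (mul_nonneg hc hδ)

theorem intervalIntegrable_exp_integral {φ : ℝ → ℝ} (ht : 0 ≤ t) (hφ : ContinuousOn φ (Icc 0 t)) :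
    IntervalIntegrable (fun s => Real.exp (∫ u in s..t, φ u)) volume 0 t := by
  rw [← uIcc_of_le ht] at hφ
  exact (Real.continuous_exp.comp_continuousOn
    (intervalIntegral.continuousOn_primitive_interval_left hφ.integrableOn_uIcc)).intervalIntegrable

end SampledSums

section BoundedPath

variable {x : ℝ → ℝ} {R M : ℝ}

theorem exists_abs_comp_le {u : ℝ → ℝ} (hu : Continuous u) (hxR : ∀ t, 0 ≤ t → |x t| ≤ R) :
    ∃ B, 0 ≤ B ∧ ∀ t, 0 ≤ t → |u (x t)| ≤ B := by
  obtain ⟨B, hB⟩ := isCompact_Icc.exists_bound_of_continuousOn (hu.continuousOn (s := Icc (-R) R))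
  exact ⟨max B 0, le_max_right _ _, fun t ht =>
    (hB _ (abs_le.1 (hxR t ht))).trans (le_max_left _ _)⟩

theorem abs_comp_sub_le_of_lipschitzOnWith {u : ℝ → ℝ} {L : ℝ≥0}
    (hu : LipschitzOnWith L u (Icc (-R) R)) (hxR : ∀ t, 0 ≤ t → |x t| ≤ R)
    (hxM : ∀ s t, 0 ≤ s → s ≤ t → |x t - x s| ≤ M * (t - s)) {a s : ℝ} (ha : 0 ≤ a)
    (has : a ≤ s) : |u (x s) - u (x a)| ≤ L * M * (s - a) := by
  have h := hu.dist_le_mul (x s) (abs_le.1 (hxR s (ha.trans has))) (x a) (abs_le.1 (hxR a ha))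
  rw [Real.dist_eq, Real.dist_eq] at h
  calc |u (x s) - u (x a)| ≤ L * |x s - x a| := h
    _ ≤ L * (M * (s - a)) := mul_le_mul_of_nonneg_left (hxM a s ha has) L.2
    _ = L * M * (s - a) := by ring

theorem exists_abs_sampling_integrands_le {u v : ℝ → ℝ} {L : ℝ≥0} (hu : ContDiff ℝ 1 u)
    (hv : LipschitzWith L v) (hxR : ∀ t, 0 ≤ t → |x t| ≤ R) (hM : 0 ≤ M)
    (hxM : ∀ s t, 0 ≤ s → s ≤ t → |x t - x s| ≤ M * (t - s)) :
    ∃ c, 0 ≤ c ∧ ∀ a s, 0 ≤ a → a ≤ s →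
      |(v (x a) - v (x s)) * u (x a)| ≤ c * (s - a) ∧
      |v (x s) * (u (x a) - u (x s))| ≤ c * (s - a) := by
  obtain ⟨Bu, hBu0, hBu⟩ := exists_abs_comp_le hu.continuous hxR
  obtain ⟨Bv, hBv0, hBv⟩ := exists_abs_comp_le hv.continuous hxR
  obtain ⟨Lu, hLu⟩ := (hu.contDiffOn (s := Icc (-R) R)).exists_lipschitzOnWith one_ne_zero
    (convex_Icc _ _) isCompact_Icc
  refine ⟨(L * Bu + Bv * Lu) * M, by positivity, fun a s ha has => ⟨?_, ?_⟩⟩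
  all_goals
    have hMsa : 0 ≤ M * (s - a) := mul_nonneg hM (sub_nonneg.2 has)
    rw [abs_mul, abs_sub_comm]
  · have hdv := abs_comp_sub_le_of_lipschitzOnWith hv.lipschitzOnWith hxR hxM ha has
    nlinarith [mul_le_mul hdv (hBu a ha) (abs_nonneg _) (by positivity),
      mul_nonneg (mul_nonneg hBv0 Lu.coe_nonneg) hMsa]
  · have hdu := abs_comp_sub_le_of_lipschitzOnWith hLu hxR hxM ha has
    nlinarith [mul_le_mul (hBv s (ha.trans has)) hdu (abs_nonneg _) hBv0,
      mul_nonneg (mul_nonneg L.coe_nonneg hBu0) hMsa]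

end BoundedPath

theorem lipschitzWith_of_abs_deriv_le {v : ℝ → ℝ} {K : ℝ} (hv : Differentiable ℝ v)
    (h : ∀ y, |deriv v y| ≤ K) : LipschitzWith K.toNNReal v :=
  lipschitzWith_of_nnnorm_deriv_le hv fun y => by
    rw [← NNReal.coe_le_coe, coe_nnnorm, Real.coe_toNNReal']
    exact (h y).trans (le_max_left _ _)

theorem mul_add_neg_of_lt_abs {f κ : ℝ → ℝ} {lam γ : ℝ} (hlam : 0 < lam)
    (hcontr : ∀ a b : ℝ, (a - b) * (f a - f b) ≤ -lam * (a - b) ^ 2)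
    (hκbd : ∀ a : ℝ, |κ a| ≤ γ) {y : ℝ} (hy : (|f 0| + γ) / lam < |y|) :
    y * (f y + κ y) < 0 := by
  have hf : y * (f y - f 0) ≤ -lam * |y| ^ 2 := by simpa using hcontr y 0
  have hf0 : y * f 0 ≤ |y| * |f 0| := (le_abs_self _).trans (abs_mul _ _).le
  have hκ : y * κ y ≤ |y| * γ :=
    (le_abs_self _).trans (by rw [abs_mul]; exact mul_le_mul_of_nonneg_left (hκbd y) (abs_nonneg y))
  have hlt : |f 0| + γ < lam * |y| := by rwa [div_lt_iff₀' hlam] at hy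
  have hγ : 0 ≤ γ := (abs_nonneg _).trans (hκbd 0)
  have hy0 : 0 < |y| := pos_of_mul_pos_right (by linarith [abs_nonneg (f 0)]) hlam.le
  nlinarith [mul_lt_mul_of_pos_left hlt hy0]

theorem exists_bounds_of_contraction {f κ x : ℝ → ℝ} {x₀ lam γ : ℝ} (hlam : 0 < lam)
    (hcontr : ∀ a b : ℝ, (a - b) * (f a - f b) ≤ -lam * (a - b) ^ 2)
    (hκbd : ∀ a : ℝ, |κ a| ≤ γ) (hf : Continuous f) (hκ : Continuous κ)
    (hx : ∀ t : ℝ, 0 ≤ t → x t = x₀ + ∫ s in (0:ℝ)..t, (f (x s) + κ (x s))) :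
    ∃ R M, 0 ≤ M ∧ (∀ t, 0 ≤ t → |x t| ≤ R) ∧
      (∀ s t, 0 ≤ s → s ≤ t → |x t - x s| ≤ M * (t - s)) ∧
      ∀ t, 0 ≤ t → ContinuousOn x (Icc 0 t) := by
  have hF : Continuous fun y => f y + κ y := hf.add hκ
  have hx₀ : |x₀| ≤ max |x₀| ((|f 0| + γ) / lam + 1) := le_max_left _ _
  have hdiss : ∀ y, max |x₀| ((|f 0| + γ) / lam + 1) ≤ |y| → y * (f y + κ y) < 0 :=
    fun y hy => mul_add_neg_of_lt_abs hlam hcontr hκbd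
      (by linarith [le_max_right |x₀| ((|f 0| + γ) / lam + 1)])
  have hxR := fun t ht => abs_le_of_integral_eq hF hx hx₀ hdiss (t := t) ht
  have hint := fun T (hT : 0 ≤ T) => intervalIntegrable_of_integral_eq hF hx hx₀ hdiss hT
  obtain ⟨M, hM0, hM⟩ := exists_abs_comp_le hF hxR
  exact ⟨_, M, hM0, hxR, fun s t hs hst => abs_sub_le_of_integral_eq hx hint hM hs hst,
    fun t ht => continuousOn_Icc_of_integral_eq hx ht (hint t ht)⟩

theorem stmt7_general
    (f κ : ℝ → ℝ) (x₀ : ℝ) (x : ℝ → ℝ)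
    -- Assumption (A1)
    (lam γ : ℝ)
    (hlam : 0 < lam)
    (hcontr : ∀ a b : ℝ, (a - b) * (f a - f b) ≤ -lam * (a - b) ^ 2)
    (hκbd : ∀ a : ℝ, |κ a| ≤ γ)
    -- Assumption (A3)
    (hfd : Differentiable ℝ f) (hfd2 : Differentiable ℝ (deriv f))
    (hκd : Differentiable ℝ κ) (hκd2 : Differentiable ℝ (deriv κ))
    (K : ℝ) (hK : ∀ y : ℝ, |deriv (deriv κ) y| ≤ K)
    (Cstar : ℝ)
    (hint : ∀ m : ℕ, (m = 1 ∨ m = 2) → ∀ t : ℝ, 0 ≤ t →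
      (∫ s in (0:ℝ)..t,
        Real.exp ((m : ℝ) * ∫ u in s..t, (deriv f (x u) + deriv κ (x u)))) ≤ Cstar)
    -- the closed-loop ODE `dx/dt = f(x) + κ(x)`, `x(0) = x₀`
    (hx : ∀ t : ℝ, 0 ≤ t → x t = x₀ + ∫ s in (0:ℝ)..t, (f (x s) + κ (x s)))
    :
    ∀ p : ℕ, 1 ≤ p → ∃ C : ℝ, 0 < C ∧ ∀ δ : ℝ, 0 < δ → δ < 1 → ∀ t : ℝ, 0 ≤ t →
      |∑ i ∈ Finset.range (⌊t / δ⌋).toNat,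
          ∫ s in ((i : ℝ) * δ)..(((i : ℝ) + 1) * δ),
            (deriv κ (x ((i : ℝ) * δ)) - deriv κ (x s)) * f (x ((i : ℝ) * δ)) *
              Real.exp (∫ u in s..t, (deriv f (x u) + deriv κ (x u)))| ^ p
        +
      |∑ i ∈ Finset.range (⌊t / δ⌋).toNat,
          ∫ s in ((i : ℝ) * δ)..(((i : ℝ) + 1) * δ),
            deriv κ (x s) * (f (x ((i : ℝ) * δ)) - f (x s)) *
              Real.exp (∫ u in s..t, (deriv f (x u) + deriv κ (x u)))| ^ p
        ≤ C * δ ^ p := by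
  intro p _
  obtain ⟨R, M, hM, hxR, hxM, hxc⟩ :=
    exists_bounds_of_contraction hlam hcontr hκbd hfd.continuous hκd.continuous hx
  obtain ⟨c, hc, hcs⟩ := exists_abs_sampling_integrands_le (contDiff_one_iff_deriv.2
    ⟨hfd, hfd2.continuous⟩) (lipschitzWith_of_abs_deriv_le hκd2 hK) hxR hM hxM
  have hC : 0 ≤ Cstar := by simpa using hint 1 (Or.inl rfl) 0 le_rfl
  refine ⟨2 * (c * Cstar) ^ p + 1, by positivity, fun δ hδ _ t ht => ?_⟩
  have hNt := toNat_floor_div_mul_le hδ ht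
  have hE := intervalIntegrable_exp_integral ht
    ((hfd2.continuous.comp_continuousOn (hxc t ht)).add
      (hκd2.continuous.comp_continuousOn (hxc t ht)))
  have hEC : ∫ s in (0:ℝ)..t, Real.exp (∫ u in s..t, (deriv f (x u) + deriv κ (x u))) ≤ Cstar := by
    simpa using hint 1 (Or.inl rfl) t ht
  have h₂ := abs_sum_integral_mul_le hδ.le hNt (fun _ => (Real.exp_pos _).le) hE hEC hc
    fun i _ s hs => (hcs _ s (by positivity) hs.1).1
  have h₃ := abs_sum_integral_mul_le hδ.le hNt (fun _ => (Real.exp_pos _).le) hE hEC hc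
    fun i _ s hs => (hcs _ s (by positivity) hs.1).2
  calc _ ≤ (c * δ * Cstar) ^ p + (c * δ * Cstar) ^ p :=
        add_le_add (pow_le_pow_left₀ (abs_nonneg _) h₂ p) (pow_le_pow_left₀ (abs_nonneg _) h₃ p)
    _ ≤ (2 * (c * Cstar) ^ p + 1) * δ ^ p := by
        have : 0 ≤ δ ^ p := by positivity
        rw [show c * δ * Cstar = c * Cstar * δ by ring, mul_pow]
        nlinarith

/-- Uniform-in-time bound `|𝓡₂^δ(t)|^p + |𝓡₃^δ(t)|^p ≤ C·δ^p` for the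
Riemann-sum remainders of the sampled drift term, with
`E(s,t) = exp(∫ₛᵗ (f'(x(u)) + κ'(x(u))) du)`. -/
theorem stmt7
    (f κ : ℝ → ℝ) (x₀ : ℝ) (x : ℝ → ℝ)
    -- Assumption (A1)
    (lam ξ μ Lκ γ : ℝ) (q : ℕ)
    (hlam : 0 < lam) (hξ : 0 < ξ) (hμ : 0 < μ) (hLκ : 0 < Lκ) (hγ : 0 < γ)
    (hcontr : ∀ a b : ℝ, (a - b) * (f a - f b) ≤ -lam * (a - b) ^ 2)
    (hfLip : ∀ a b : ℝ, |f a - f b| ≤ (ξ * (|a| ^ q + |b| ^ q) + μ) * |a - b|)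
    (hκLip : ∀ a b : ℝ, |κ a - κ b| ≤ Lκ * |a - b|)
    (hgap : lam / 2 - Lκ > 0)
    (hκbd : ∀ a : ℝ, |κ a| ≤ γ)
    -- Assumption (A3)
    (hfd : Differentiable ℝ f) (hfd2 : Differentiable ℝ (deriv f))
    (hκd : Differentiable ℝ κ) (hκd2 : Differentiable ℝ (deriv κ))
    (K : ℝ) (hK : ∀ y : ℝ, |deriv (deriv κ) y| ≤ K)
    (cf : ℝ) (rf : ℕ) (hf2 : ∀ y : ℝ, |deriv (deriv f) y| ≤ cf * (1 + |y| ^ rf))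
    (Cstar : ℝ) (hCstar : 0 < Cstar)
    (hint : ∀ m : ℕ, (m = 1 ∨ m = 2) → ∀ t : ℝ, 0 ≤ t →
      (∫ s in (0:ℝ)..t,
        Real.exp ((m : ℝ) * ∫ u in s..t, (deriv f (x u) + deriv κ (x u)))) ≤ Cstar)
    -- the closed-loop ODE `dx/dt = f(x) + κ(x)`, `x(0) = x₀`
    (hx : ∀ t : ℝ, 0 ≤ t → x t = x₀ + ∫ s in (0:ℝ)..t, (f (x s) + κ (x s)))
    :
    ∀ p : ℕ, 1 ≤ p → ∃ C : ℝ, 0 < C ∧ ∀ δ : ℝ, 0 < δ → δ < 1 → ∀ t : ℝ, 0 ≤ t →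
      |∑ i ∈ Finset.range (⌊t / δ⌋).toNat,
          ∫ s in ((i : ℝ) * δ)..(((i : ℝ) + 1) * δ),
            (deriv κ (x ((i : ℝ) * δ)) - deriv κ (x s)) * f (x ((i : ℝ) * δ)) *
              Real.exp (∫ u in s..t, (deriv f (x u) + deriv κ (x u)))| ^ p
        +
      |∑ i ∈ Finset.range (⌊t / δ⌋).toNat,
          ∫ s in ((i : ℝ) * δ)..(((i : ℝ) + 1) * δ),
            deriv κ (x s) * (f (x ((i : ℝ) * δ)) - f (x s)) *
              Real.exp (∫ u in s..t, (deriv f (x u) + deriv κ (x u)))| ^ p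
        ≤ C * δ ^ p :=
  stmt7_general f κ x₀ x lam γ hlam hcontr hκbd hfd hfd2 hκd hκd2 K hK Cstar hint hx
end
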